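/- arXiv:1801.03508 — 10 statements merged into one kernel-verified Lean document; each statement's English description precedes it below -/
import Mathlib

section
/- Suppose n ≥ 2 and the last dimension equals the product of the others: d_n = ∏_{i ≠ n} d_i, where n denotes the largest index. Then: (i) if ψ is a normalized state with ρ_n(ψ) = (1/(d n)) • 1, then ψ is locally maximally entangled; (ii) LME states exist for d; and (iii) any two normalized LME states ψ, ψ' for d differ by a unitary acting on the last factor, i.e. there is a unitary (d n) × (d n) matrix U with ψ'(x) = ∑_{j : Fin (d n)} U (x n) j · ψ (Function.update x n j) for all x. -/
open scoped ComplexConjugate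

noncomputable section

def rhoK {n : ℕ} (d : Fin n → ℕ) (ψ : (∀ i, Fin (d i)) → ℂ) (k : Fin n) :
    Matrix (Fin (d k)) (Fin (d k)) ℂ :=
  Matrix.of fun j l =>
    ∑ x : ∀ i, Fin (d i), if x k = j then ψ x * conj (ψ (Function.update x k l)) else 0

def Normalized {n : ℕ} {d : Fin n → ℕ} (ψ : (∀ i, Fin (d i)) → ℂ) : Prop :=
  ∑ x, ‖ψ x‖ ^ 2 = 1

def IsLME {n : ℕ} (d : Fin n → ℕ) (ψ : (∀ i, Fin (d i)) → ℂ) : Prop :=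
  Normalized ψ ∧ ∀ k, rhoK d ψ k = (1 / (d k : ℂ)) • 1

def LMEExists (n : ℕ) (d : Fin n → ℕ) : Prop := ∃ ψ, IsLME d ψ

def Nfun {n : ℕ} (k : Fin n → ℕ) : ℤ :=
  ∑ S ∈ Finset.univ.powerset.filter (fun S : Finset (Fin n) => S.Nonempty),
    (-1 : ℤ) ^ (S.card + 1) * ((Finset.gcd S k : ℕ) : ℤ)

def Rfun {n : ℕ} (d : Fin n → ℕ) : ℤ :=
  (∏ i, (d i : ℤ)) - Nfun (fun i => (d i) ^ 2)

def Dfun {n : ℕ} (d : Fin n → ℕ) : ℤ :=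
  (∏ i, (d i : ℤ)) - 1 - ∑ i, ((d i : ℤ) ^ 2 - 1)

section AuxLME

variable {n : ℕ} (d : Fin (n + 1) → ℕ)

/-- Splitting off the last coordinate. -/
def snocE : ((∀ i : Fin n, Fin (d i.castSucc)) × Fin (d (Fin.last n))) ≃
    (∀ i : Fin (n + 1), Fin (d i)) where
  toFun p := Fin.snoc p.1 p.2
  invFun x := (Fin.init x, x (Fin.last n))
  left_inv p := by simp
  right_inv x := by simp

lemma prod_castSucc_eq (hd : ∀ i, 1 ≤ d i)
    (hlast : d (Fin.last n) = ∏ i ∈ Finset.univ.erase (Fin.last n), d i) :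
    ∏ i : Fin n, d i.castSucc = d (Fin.last n) := by
  have h1 : (∏ i : Fin n, d i.castSucc) * d (Fin.last n) = ∏ i : Fin (n + 1), d i :=
    (Fin.prod_univ_castSucc d).symm
  have h2 : ∏ i : Fin (n + 1), d i =
      d (Fin.last n) * ∏ i ∈ Finset.univ.erase (Fin.last n), d i :=
    (Finset.mul_prod_erase _ _ (Finset.mem_univ _)).symm
  have h3 : (∏ i : Fin n, d i.castSucc) * d (Fin.last n) =
      d (Fin.last n) * d (Fin.last n) := by rw [h1, h2, ← hlast]
  have hpos : 0 < d (Fin.last n) := hd _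
  exact Nat.eq_of_mul_eq_mul_right hpos (by omega)

lemma cardR_eq (hd : ∀ i, 1 ≤ d i)
    (hlast : d (Fin.last n) = ∏ i ∈ Finset.univ.erase (Fin.last n), d i) :
    Fintype.card (∀ i : Fin n, Fin (d i.castSucc)) = d (Fin.last n) := by
  simp [Fintype.card_pi, prod_castSucc_eq d hd hlast]

lemma rhoK_last_apply (ψ : (∀ i, Fin (d i)) → ℂ) (j l : Fin (d (Fin.last n))) :
    rhoK d ψ (Fin.last n) j l =
      ∑ r : ∀ i : Fin n, Fin (d i.castSucc), ψ (Fin.snoc r j) * conj (ψ (Fin.snoc r l)) := by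
  simp only [rhoK, Matrix.of_apply]
  rw [← Equiv.sum_comp (snocE d)
    (fun x => if x (Fin.last n) = j then ψ x * conj (ψ (Function.update x (Fin.last n) l)) else 0)]
  rw [Fintype.sum_prod_type]
  simp [snocE, Fin.update_snoc_last]

lemma rowOrtho (D : ℕ) (hD : 1 ≤ D) {R : Type*} [Fintype R] [DecidableEq R] (e : R ≃ Fin D)
    (A : R → Fin D → ℂ)
    (hcol : ∀ j l : Fin D, ∑ r, A r j * conj (A r l) = if j = l then 1 / (D : ℂ) else 0)
    (r r' : R) :
    ∑ t, A r t * conj (A r' t) = if r = r' then 1 / (D : ℂ) else 0 := by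
  have hD0 : (D : ℂ) ≠ 0 := Nat.cast_ne_zero.2 (by omega)
  set B : Matrix (Fin D) (Fin D) ℂ := Matrix.of fun j s => A (e.symm s) j with hB
  simp only [starRingEnd_apply] at hcol ⊢
  have hBBH : B * B.conjTranspose = (1 / (D : ℂ)) • 1 := by
    ext j l
    simp only [Matrix.mul_apply, Matrix.conjTranspose_apply, hB, Matrix.of_apply,
      Matrix.smul_apply, Matrix.one_apply, smul_eq_mul]
    rw [Equiv.sum_comp e.symm (fun r0 => A r0 j * star (A r0 l)), hcol]
    split_ifs with h <;> simp
  have h1 : B * ((D : ℂ) • B.conjTranspose) = 1 := by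
    rw [Matrix.mul_smul, hBBH, smul_smul]
    rw [mul_one_div, div_self hD0, one_smul]
  have h2 : ((D : ℂ) • B.conjTranspose) * B = 1 := mul_eq_one_comm.mp h1
  have h3 := congrFun (congrFun h2 (e r')) (e r)
  simp only [Matrix.mul_apply, Matrix.smul_apply, Matrix.conjTranspose_apply, hB,
    Matrix.of_apply, Matrix.one_apply, Equiv.symm_apply_apply, smul_eq_mul,
    EmbeddingLike.apply_eq_iff_eq] at h3
  simp only [mul_assoc] at h3
  rw [← Finset.mul_sum] at h3
  have h4 : ∑ j, star (A r' j) * A r j = (if r' = r then 1 else 0) / (D : ℂ) := by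
    rw [eq_div_iff hD0, mul_comm]
    exact h3
  have h5 : ∑ t, A r t * star (A r' t) = ∑ j, star (A r' j) * A r j := by
    congr 1; ext t; ring
  rw [h5, h4]
  by_cases h : r = r' <;> simp [h, eq_comm]

lemma sum_fiber (i : Fin n) (j : Fin (d i.castSucc)) (c : ℂ) :
    (∑ r : ∀ i' : Fin n, Fin (d i'.castSucc), if r i = j then c else 0)
      = (∏ i' ∈ Finset.univ.erase i, (d i'.castSucc : ℕ)) * c := by
  rw [← Equiv.sum_comp (Equiv.piSplitAt i (fun i' => Fin (d i'.castSucc))).symm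
      (fun r => if r i = j then c else 0)]
  have key : ∀ (a : Fin (d i.castSucc)) (b : ∀ j' : {j' : Fin n // j' ≠ i}, Fin (d j'.val.castSucc)),
      ((Equiv.piSplitAt i (fun i' => Fin (d i'.castSucc))).symm (a, b)) i = a := by
    intro a b
    simp [Equiv.piSplitAt]
  rw [Fintype.sum_prod_type]
  simp only [key]
  simp only [Finset.sum_const, Finset.card_univ, smul_ite, smul_zero,
    Finset.sum_ite_eq', Finset.mem_univ, if_true, nsmul_eq_mul]
  congr 1
  rw [Fintype.card_pi]
  push_cast
  rw [Finset.prod_subtype (Finset.univ.erase i) (p := fun j' => j' ≠ i)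
    (fun x => by simp [Finset.mem_erase])]
  · simp
  · infer_instance

lemma dim_mul_erase
    (hprod : ∏ i : Fin n, d i.castSucc = d (Fin.last n)) (i : Fin n) :
    d i.castSucc * ∏ i' ∈ Finset.univ.erase i, d i'.castSucc = d (Fin.last n) := by
  have h := Finset.mul_prod_erase Finset.univ (fun i' : Fin n => d i'.castSucc) (Finset.mem_univ i)
  simpa [hprod] using h

/-- Part (i): maximal mixing of the last subsystem implies LME. -/
lemma partI (hd : ∀ i, 1 ≤ d i)
    (hlast : d (Fin.last n) = ∏ i ∈ Finset.univ.erase (Fin.last n), d i)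
    (ψ : (∀ i, Fin (d i)) → ℂ) (hnorm : Normalized ψ)
    (hψ : rhoK d ψ (Fin.last n) = (1 / (d (Fin.last n) : ℂ)) • 1) : IsLME d ψ := by
  have hD : 1 ≤ d (Fin.last n) := hd _
  have hprod := prod_castSucc_eq d hd hlast
  have hrow : ∀ r r' : ∀ i : Fin n, Fin (d i.castSucc),
      ∑ t, ψ (Fin.snoc r t) * conj (ψ (Fin.snoc r' t)) =
        if r = r' then 1 / (d (Fin.last n) : ℂ) else 0 := by
    intro r r'
    refine rowOrtho (d (Fin.last n)) hD (Fintype.equivFinOfCardEq (cardR_eq d hd hlast))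
      (fun r0 t => ψ (Fin.snoc r0 t)) ?_ r r'
    intro j l
    rw [← rhoK_last_apply d ψ j l, hψ]
    simp only [Matrix.smul_apply, Matrix.one_apply, smul_eq_mul]
    split_ifs with h <;> simp
  refine ⟨hnorm, ?_⟩
  intro k
  induction k using Fin.lastCases with
  | last => exact hψ
  | cast i =>
    ext j l
    show rhoK d ψ i.castSucc j l = _
    simp only [rhoK, Matrix.of_apply]
    rw [← Equiv.sum_comp (snocE d)
      (fun x => if x i.castSucc = j then ψ x * conj (ψ (Function.update x i.castSucc l)) else 0)]
    rw [Fintype.sum_prod_type]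
    simp only [snocE, Equiv.coe_fn_mk, Fin.snoc_castSucc, ← Fin.snoc_update]
    have swap : ∀ r : ∀ i' : Fin n, Fin (d i'.castSucc),
        (∑ t, if r i = j then
            ψ (Fin.snoc r t) * conj (ψ (Fin.snoc (Function.update r i l) t)) else 0)
          = if r i = j then (if r = Function.update r i l
              then 1 / (d (Fin.last n) : ℂ) else 0) else 0 := by
      intro r
      by_cases h : r i = j
      · simp only [h, if_true]
        exact hrow r (Function.update r i l)
      · simp [h]
    simp only [swap]
    have combine : ∀ r : ∀ i' : Fin n, Fin (d i'.castSucc),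
        (if r i = j then (if r = Function.update r i l
            then 1 / (d (Fin.last n) : ℂ) else 0) else 0)
          = if r i = j then (if j = l then 1 / (d (Fin.last n) : ℂ) else 0) else 0 := by
      intro r
      by_cases h : r i = j
      · simp only [h, if_true]
        have hiff : r = Function.update r i l ↔ j = l := by
          constructor
          · intro hr
            have := congrFun hr i
            rw [Function.update_self] at this
            rw [← h, this]
          · intro hl
            rw [← hl, ← h, Function.update_eq_self]
        exact if_congr hiff rfl rfl
      · simp [h]
    simp only [combine]
    by_cases hjl : j = l
    · subst hjl
      simp only [if_pos rfl]
      rw [sum_fiber]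
      have hPD : (d i.castSucc : ℂ) * (∏ i' ∈ Finset.univ.erase i, (d i'.castSucc : ℕ)) =
          (d (Fin.last n) : ℂ) := by
        exact_mod_cast congrArg (Nat.cast : ℕ → ℂ) (dim_mul_erase d hprod i)
      have hdc0 : (d i.castSucc : ℂ) ≠ 0 := Nat.cast_ne_zero.2 (by have := hd i.castSucc; omega)
      have hD0 : (d (Fin.last n) : ℂ) ≠ 0 := Nat.cast_ne_zero.2 (by omega)
      have hP0 : ((∏ i' ∈ Finset.univ.erase i, d i'.castSucc : ℕ) : ℂ) ≠ 0 := by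
        rw [Nat.cast_ne_zero]
        exact Finset.prod_ne_zero_iff.2 fun i' _ => by have := hd i'.castSucc; omega
      simp only [Matrix.smul_apply, Matrix.one_apply_eq, smul_eq_mul, mul_one]
      rw [← hPD]
      push_cast at hP0 hdc0 ⊢
      field_simp
    · simp [Matrix.one_apply, hjl]

end AuxLME

section Part23

variable {n : ℕ} (d : Fin (n + 1) → ℕ)

lemma col_orthonormal (ψ : (∀ i, Fin (d i)) → ℂ)
    (hψ : rhoK d ψ (Fin.last n) = (1 / (d (Fin.last n) : ℂ)) • 1)
    (j l : Fin (d (Fin.last n))) :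
    ∑ r : ∀ i : Fin n, Fin (d i.castSucc), ψ (Fin.snoc r j) * conj (ψ (Fin.snoc r l)) =
      if j = l then 1 / (d (Fin.last n) : ℂ) else 0 := by
  rw [← rhoK_last_apply d ψ j l, hψ]
  simp only [Matrix.smul_apply, Matrix.one_apply, smul_eq_mul]
  split_ifs with h <;> simp

/-- Part (ii): existence of an LME state. -/
lemma partII (hd : ∀ i, 1 ≤ d i)
    (hlast : d (Fin.last n) = ∏ i ∈ Finset.univ.erase (Fin.last n), d i) :
    LMEExists (n + 1) d := by
  have hD : 1 ≤ d (Fin.last n) := hd _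
  have hD0 : (d (Fin.last n) : ℝ) ≠ 0 := Nat.cast_ne_zero.2 (by omega)
  have hD0' : (d (Fin.last n) : ℂ) ≠ 0 := Nat.cast_ne_zero.2 (by omega)
  set e := Fintype.equivFinOfCardEq (cardR_eq d hd hlast) with he
  set c : ℝ := 1 / Real.sqrt (d (Fin.last n)) with hc
  have hc0 : 0 ≤ c := by positivity
  set ψ0 : (∀ i, Fin (d i)) → ℂ :=
    fun x => (c : ℂ) * (if x (Fin.last n) = e (Fin.init x) then 1 else 0) with hψ0
  have hcsq : c ^ 2 = 1 / (d (Fin.last n) : ℝ) := by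
    rw [hc, div_pow, one_pow, Real.sq_sqrt (Nat.cast_nonneg _)]
  have hval : ∀ (r : ∀ i : Fin n, Fin (d i.castSucc)) (t : Fin (d (Fin.last n))),
      ψ0 (Fin.snoc r t) = (c : ℂ) * (if t = e r then 1 else 0) := by
    intro r t
    simp [hψ0]
  have hnorm : Normalized ψ0 := by
    unfold Normalized
    rw [← Equiv.sum_comp (snocE d) (fun x => ‖ψ0 x‖ ^ 2)]
    rw [Fintype.sum_prod_type]
    have h1 : ∀ (r : ∀ i : Fin n, Fin (d i.castSucc)) (t : Fin (d (Fin.last n))),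
        ‖ψ0 ((snocE d) (r, t))‖ ^ 2 = if t = e r then c ^ 2 else 0 := by
      intro r t
      have hs : (snocE d) (r, t) = Fin.snoc r t := rfl
      rw [hs, hval]
      by_cases h : t = e r <;>
        simp [h, Complex.norm_real, abs_of_nonneg hc0]
    simp only [h1, Finset.sum_ite_eq', Finset.mem_univ, if_true]
    rw [Finset.sum_const, Finset.card_univ, cardR_eq d hd hlast, nsmul_eq_mul, hcsq]
    field_simp
  have hrho : rhoK d ψ0 (Fin.last n) = (1 / (d (Fin.last n) : ℂ)) • 1 := by
    ext j l
    rw [rhoK_last_apply]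
    have h1 : ∀ r : ∀ i : Fin n, Fin (d i.castSucc),
        ψ0 (Fin.snoc r j) * conj (ψ0 (Fin.snoc r l)) =
          (fun s => if j = s then (if l = s then ((c : ℂ) * c) else 0) else 0) (e r) := by
      intro r
      rw [hval, hval]
      by_cases h1 : j = e r <;> by_cases h2 : l = e r <;>
        simp [h1, h2, Complex.conj_ofReal]
    rw [Finset.sum_congr rfl (fun r _ => h1 r)]
    rw [Equiv.sum_comp e (fun s => if j = s then (if l = s then ((c : ℂ) * c) else 0) else 0)]
    rw [Finset.sum_ite_eq Finset.univ j
      (fun s => if l = s then ((c : ℂ) * c) else 0)]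
    have hcc : (c : ℂ) * c = 1 / (d (Fin.last n) : ℂ) := by
      rw [← Complex.ofReal_mul, ← sq, hcsq]
      push_cast
      ring
    simp only [Finset.mem_univ, if_true, Matrix.smul_apply, Matrix.one_apply, smul_eq_mul]
    by_cases h : j = l
    · simp [h, hcc]
    · simp [h, Ne.symm h]
  exact ⟨ψ0, partI d hd hlast ψ0 hnorm hrho⟩

end Part23

section Part3

lemma partIIIcore (D : ℕ) (hD : 1 ≤ D) {R : Type*} [Fintype R] (e : R ≃ Fin D)
    (A A' : R → Fin D → ℂ)
    (hcol : ∀ j l : Fin D, ∑ r, A r j * conj (A r l) = if j = l then 1 / (D : ℂ) else 0)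
    (hcol' : ∀ j l : Fin D, ∑ r, A' r j * conj (A' r l) = if j = l then 1 / (D : ℂ) else 0) :
    ∃ U : Matrix (Fin D) (Fin D) ℂ,
      U * U.conjTranspose = 1 ∧ U.conjTranspose * U = 1 ∧
        ∀ (r : R) (t : Fin D), A' r t = ∑ j, U t j * A r j := by
  have hD0 : (D : ℂ) ≠ 0 := Nat.cast_ne_zero.2 (by omega)
  set c : ℂ := ((Real.sqrt D : ℝ) : ℂ) with hcdef
  have hstarc : star c = c := by
    rw [hcdef, Complex.star_def, Complex.conj_ofReal]
  have hc : c * star c = (D : ℂ) := by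
    rw [hstarc, hcdef, ← Complex.ofReal_mul, Real.mul_self_sqrt (Nat.cast_nonneg _)]
    simp
  have hc0 : c ≠ 0 := by
    rw [hcdef]
    exact_mod_cast Complex.ofReal_ne_zero.2
      (ne_of_gt (Real.sqrt_pos.2 (by exact_mod_cast Nat.pos_of_ne_zero (by omega))))
  simp only [starRingEnd_apply] at hcol hcol'
  set B : Matrix (Fin D) (Fin D) ℂ := Matrix.of fun j s => c * A (e.symm s) j with hBdef
  set B' : Matrix (Fin D) (Fin D) ℂ := Matrix.of fun j s => c * A' (e.symm s) j with hB'def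
  have key : ∀ (M : R → Fin D → ℂ),
      (∀ j l : Fin D, ∑ r, M r j * star (M r l) = if j = l then 1 / (D : ℂ) else 0) →
      (Matrix.of fun j s => c * M (e.symm s) j) *
        (Matrix.of fun j s => c * M (e.symm s) j).conjTranspose = 1 := by
    intro M hM
    ext j l
    simp only [Matrix.mul_apply, Matrix.conjTranspose_apply, Matrix.of_apply, star_mul',
      hstarc]
    have hterm : ∀ s : Fin D,
        c * M (e.symm s) j * (c * star (M (e.symm s) l)) =
          (c * star c) * ((fun r => M r j * star (M r l)) (e.symm s)) := by
      intro s
      rw [hstarc]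
      ring
    rw [Finset.sum_congr rfl (fun s _ => hterm s)]
    rw [← Finset.mul_sum, Equiv.sum_comp e.symm (fun r => M r j * star (M r l)), hM, hc]
    simp only [Matrix.one_apply]
    split_ifs with h
    · field_simp
    · simp
  have hB1 : B * B.conjTranspose = 1 := key A hcol
  have hB'1 : B' * B'.conjTranspose = 1 := key A' hcol'
  have hB2 : B.conjTranspose * B = 1 := mul_eq_one_comm.mp hB1
  have hB'2 : B'.conjTranspose * B' = 1 := mul_eq_one_comm.mp hB'1
  refine ⟨B' * B.conjTranspose, ?_, ?_, ?_⟩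
  · rw [Matrix.conjTranspose_mul, Matrix.conjTranspose_conjTranspose,
      Matrix.mul_assoc, ← Matrix.mul_assoc B.conjTranspose, hB2, Matrix.one_mul, hB'1]
  · rw [Matrix.conjTranspose_mul, Matrix.conjTranspose_conjTranspose,
      Matrix.mul_assoc, ← Matrix.mul_assoc B'.conjTranspose, hB'2, Matrix.one_mul, hB1]
  · intro r t
    have hUB : (B' * B.conjTranspose) * B = B' := by
      rw [Matrix.mul_assoc, hB2, Matrix.mul_one]
    have hBval : ∀ x, B x (e r) = c * A r x := fun x => by simp [hBdef]
    have hB'val : B' t (e r) = c * A' r t := by simp [hB'def]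
    refine mul_left_cancel₀ hc0 ?_
    calc c * A' r t = B' t (e r) := hB'val.symm
      _ = ((B' * B.conjTranspose) * B) t (e r) := by rw [hUB]
      _ = ∑ x, (B' * B.conjTranspose) t x * B x (e r) := Matrix.mul_apply
      _ = ∑ x, (B' * B.conjTranspose) t x * (c * A r x) := by simp only [hBval]
      _ = c * ∑ j, (B' * B.conjTranspose) t j * A r j := by
          rw [Finset.mul_sum]
          exact Finset.sum_congr rfl fun j _ => by ring

variable {n : ℕ} (d : Fin (n + 1) → ℕ)

/-- Part (iii): uniqueness up to a unitary on the last factor. -/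
lemma partIII (hd : ∀ i, 1 ≤ d i)
    (hlast : d (Fin.last n) = ∏ i ∈ Finset.univ.erase (Fin.last n), d i)
    (ψ ψ' : (∀ i, Fin (d i)) → ℂ) (hψ : IsLME d ψ) (hψ' : IsLME d ψ') :
    ∃ U : Matrix (Fin (d (Fin.last n))) (Fin (d (Fin.last n))) ℂ,
      U * U.conjTranspose = 1 ∧ U.conjTranspose * U = 1 ∧
      ∀ x, ψ' x = ∑ j, U (x (Fin.last n)) j * ψ (Function.update x (Fin.last n) j) := by
  have hD : 1 ≤ d (Fin.last n) := hd _
  obtain ⟨U, hU1, hU2, hU3⟩ := partIIIcore (d (Fin.last n)) hD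
    (Fintype.equivFinOfCardEq (cardR_eq d hd hlast))
    (fun r t => ψ (Fin.snoc r t)) (fun r t => ψ' (Fin.snoc r t))
    (col_orthonormal d ψ (hψ.2 (Fin.last n)))
    (col_orthonormal d ψ' (hψ'.2 (Fin.last n)))
  refine ⟨U, hU1, hU2, ?_⟩
  intro x
  have hx : Fin.snoc (Fin.init x) (x (Fin.last n)) = x := Fin.snoc_init_self x
  have h := hU3 (Fin.init x) (x (Fin.last n))
  simp only [hx] at h
  rw [h]
  refine Finset.sum_congr rfl fun j _ => ?_
  congr 1
  conv_rhs => rw [← hx, Fin.update_snoc_last]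

end Part3

/-- when the last dimension equals the product of the others,
maximal mixing of the last subsystem implies LME, LME states exist, and any two
LME states differ by a unitary on the last factor. -/
theorem lme_last_dim_eq_product (n : ℕ) (hn : 1 ≤ n) (d : Fin (n + 1) → ℕ)
    (hd : ∀ i, 1 ≤ d i)
    (hlast : d (Fin.last n) = ∏ i ∈ Finset.univ.erase (Fin.last n), d i) :
    (∀ ψ : (∀ i, Fin (d i)) → ℂ, Normalized ψ →
        rhoK d ψ (Fin.last n) = (1 / (d (Fin.last n) : ℂ)) • 1 → IsLME d ψ) ∧
    LMEExists (n + 1) d ∧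
    (∀ ψ ψ' : (∀ i, Fin (d i)) → ℂ, IsLME d ψ → IsLME d ψ' →
      ∃ U : Matrix (Fin (d (Fin.last n))) (Fin (d (Fin.last n))) ℂ,
        U * U.conjTranspose = 1 ∧ U.conjTranspose * U = 1 ∧
        ∀ x, ψ' x =
          ∑ j, U (x (Fin.last n)) j * ψ (Function.update x (Fin.last n) j)) := by
  exact ⟨fun ψ hnorm hρ => partI d hd hlast ψ hnorm hρ, partII d hd hlast,
    fun ψ ψ' h h' => partIII d hd hlast ψ ψ' h h'⟩
end
end

section
/- Let 2 ≤ B ≤ C. LME states exist for the tripartite dimensions (2, B, C) if and only if either B = C, or there exist positive integers N and k with N·k ≥ 2 such that B = N·k and C = (N+1)·k. -/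
open scoped ComplexConjugate

noncomputable section

def rho1 {A B C : ℕ} (ψ : Fin A × Fin B × Fin C → ℂ) : Matrix (Fin A) (Fin A) ℂ :=
  Matrix.of fun a a' => ∑ b, ∑ c, ψ (a, b, c) * conj (ψ (a', b, c))

def rho2 {A B C : ℕ} (ψ : Fin A × Fin B × Fin C → ℂ) : Matrix (Fin B) (Fin B) ℂ :=
  Matrix.of fun b b' => ∑ a, ∑ c, ψ (a, b, c) * conj (ψ (a, b', c))

def rho3 {A B C : ℕ} (ψ : Fin A × Fin B × Fin C → ℂ) : Matrix (Fin C) (Fin C) ℂ :=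
  Matrix.of fun c c' => ∑ a, ∑ b, ψ (a, b, c) * conj (ψ (a, b, c'))

def TriNormalized {A B C : ℕ} (ψ : Fin A × Fin B × Fin C → ℂ) : Prop :=
  ∑ x, ‖ψ x‖ ^ 2 = 1

def TriIsLME {A B C : ℕ} (ψ : Fin A × Fin B × Fin C → ℂ) : Prop :=
  TriNormalized ψ ∧ rho1 ψ = (1 / (A : ℂ)) • 1 ∧
    rho2 ψ = (1 / (B : ℂ)) • 1 ∧ rho3 ψ = (1 / (C : ℂ)) • 1

def TriLMEExists (A B C : ℕ) : Prop := ∃ ψ : Fin A × Fin B × Fin C → ℂ, TriIsLME ψ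

/-!
Write the two slices `a = 0, 1` of `ψ` as `B × C` matrices `X, Y`. Maximal entanglement of
the second and third parties reads `X Xᴴ + Y Yᴴ = 1/B` and `Xᴴ X + Yᴴ Y = 1/C`. Since `Xᴴ X`
and `X Xᴴ` (and likewise for `Y`) have the same characteristic polynomial up to a factor
`t ^ (C - B)`, the multiset `S` of eigenvalues of `X Xᴴ - 1/B` satisfies
`(S + d) + (C - B)•{-1/C} = S + (C - B)•{0}` with `d = 1/B - 1/C ≠ 0`. Peeling off blocks of
`C - B` equal eigenvalues shows that `C - B` divides `card S = B`.

Conversely, both families are realised by states `∑ √p(a,b) |a, b, u(a,b)⟩` supported on two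
injective graphs `u(0,·), u(1,·)`: a cyclic shift with uniform weights when `B = C`, and the
staircase `u(a,b) = b + a k` when `(B, C) = (N k, (N + 1) k)`.
-/

open Function

namespace Multiset

variable {α : Type*} [AddCommGroup α] [IsAddTorsionFree α]

theorem eq_zero_of_map_add_eq_self {S : Multiset α} {d : α} (hd : d ≠ 0)
    (h : S.map (· + d) = S) : S = 0 := by
  have hsum := congrArg Multiset.sum h
  rw [sum_map_add, map_id', map_const', sum_replicate, add_eq_left] at hsum
  exact card_eq_zero.1 (by simpa [hd] using hsum)

theorem dvd_card_of_map_add_add_replicate_eq {d : α} (hd : d ≠ 0) {e : ℕ} {S : Multiset α}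
    {a b : α} (h : S.map (· + d) + replicate e a = S + replicate e b) : e ∣ card S := by
  classical
  induction hS : card S using Nat.strong_induction_on generalizing S a with
  | _ n ih =>
  subst hS
  by_cases hab : e = 0 ∨ a = b
  · obtain rfl | rfl := hab
    · simp_all [eq_zero_of_map_add_eq_self hd]
    · simp [eq_zero_of_map_add_eq_self hd (add_right_cancel h)]
  push Not at hab
  -- For `a ≠ b`, `S` contains `e` copies of `a`; removing them shifts `a` to `a + d`.
  have hcount : e ≤ count a S := by
    have := congrArg (count a) h
    simp only [count_add, count_replicate_self, count_replicate, if_neg hab.2.symm] at this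
    omega
  obtain ⟨S', rfl⟩ := le_iff_exists_add.1 (le_count_iff_replicate_le.1 hcount)
  have h' : S'.map (· + d) + replicate e (a + d) = S' + replicate e b := by
    rw [map_add, map_replicate] at h
    apply add_left_cancel (a := replicate e a)
    rw [← add_assoc _ S', ← h]; abel
  rw [card_add, card_replicate] at ih ⊢
  exact dvd_add dvd_rfl (ih _ (by omega) h' rfl)

end Multiset

namespace Polynomial

theorem roots_comp_X_add_C {R : Type*} [CommRing R] [IsDomain R] (p : R[X]) (a : R) :
    (p.comp (X + C a)).roots = p.roots.map (· - a) := by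
  simpa using roots_comp_C_mul_X_add_C p 1 a isUnit_one

theorem dvd_natDegree_of_X_add_C_pow_mul_comp_eq {K : Type*} [Field K] [IsAlgClosed K]
    [CharZero K] {p : K[X]} (hp : p ≠ 0) {a b : K} (hab : a ≠ b) {e : ℕ}
    (h : (X + C a) ^ e * p.comp (X + C a) = X ^ e * p.comp (X + C b)) : e ∣ p.natDegree := by
  have hroots := congrArg roots h
  rw [roots_mul (mul_ne_zero (pow_ne_zero _ (X_add_C_ne_zero a)) (comp_X_add_C_ne_zero_iff.2 hp)),
    roots_mul (mul_ne_zero (pow_ne_zero _ X_ne_zero) (comp_X_add_C_ne_zero_iff.2 hp)),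
    roots_pow, roots_pow, roots_X_add_C, roots_X, roots_comp_X_add_C, roots_comp_X_add_C,
    Multiset.nsmul_singleton, Multiset.nsmul_singleton] at hroots
  have hshift : p.roots.map (· - a) = (p.roots.map (· - b)).map (· + (b - a)) := by
    rw [Multiset.map_map]
    exact Multiset.map_congr rfl fun x _ => by simp
  rw [hshift, add_comm, add_comm (Multiset.replicate _ _)] at hroots
  simpa [IsAlgClosed.card_roots_eq_natDegree] using
    Multiset.dvd_card_of_map_add_add_replicate_eq (sub_ne_zero.2 hab.symm) hroots

end Polynomial

namespace Matrix

open Polynomial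

variable {m n R : Type*} [Fintype m] [Fintype n] [DecidableEq m] [DecidableEq n] [CommRing R]

theorem X_add_C_pow_mul_charpoly_comp_eq (P P' : Matrix n m R) (Q Q' : Matrix m n R) {β γ : R}
    (hn : P * Q + P' * Q' = scalar n β) (hm : Q * P + Q' * P' = scalar m γ)
    (hle : Fintype.card n ≤ Fintype.card m) :
    (X + C γ) ^ (Fintype.card m - Fintype.card n) * (P * Q).charpoly.comp (X + C γ) =
      X ^ (Fintype.card m - Fintype.card n) * (P * Q).charpoly.comp (X + C β) := by
  have hQP : Q * P - scalar m γ = -Q' * P' := by rw [← hm, Matrix.neg_mul]; abel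
  have hPQ : P * Q - scalar n β = P' * -Q' := by rw [← hn, Matrix.mul_neg]; abel
  calc (X + C γ) ^ (Fintype.card m - Fintype.card n) * (P * Q).charpoly.comp (X + C γ)
      = (Q * P).charpoly.comp (X + C γ) := by
        rw [charpoly_mul_comm_of_le Q P hle, mul_comp, pow_comp, X_comp]
    _ = (-Q' * P').charpoly := by rw [← charpoly_sub_scalar, hQP]
    _ = X ^ (Fintype.card m - Fintype.card n) * (P' * -Q').charpoly :=
        charpoly_mul_comm_of_le _ _ hle
    _ = X ^ (Fintype.card m - Fintype.card n) * (P * Q).charpoly.comp (X + C β) := by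
        rw [← hPQ, charpoly_sub_scalar]

end Matrix

section Slices

open Matrix

variable {A B C : ℕ}

def slice (ψ : Fin A × Fin B × Fin C → ℂ) (a : Fin A) : Matrix (Fin B) (Fin C) ℂ :=
  Matrix.of fun b c => ψ (a, b, c)

theorem rho2_eq_sum_slice (ψ : Fin A × Fin B × Fin C → ℂ) :
    rho2 ψ = ∑ a, slice ψ a * (slice ψ a)ᴴ := by
  ext b b'
  simp [rho2, slice, Matrix.sum_apply, Matrix.mul_apply]

theorem rho3_transpose_eq_sum_slice (ψ : Fin A × Fin B × Fin C → ℂ) :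
    (rho3 ψ)ᵀ = ∑ a, (slice ψ a)ᴴ * slice ψ a := by
  ext c c'
  simp [rho3, slice, Matrix.sum_apply, Matrix.mul_apply, mul_comm]

theorem sub_dvd_of_triLMEExists (hBC : B < C) (h : TriLMEExists 2 B C) : C - B ∣ B := by
  obtain ⟨ψ, -, -, h2, h3⟩ := h
  have hrow : slice ψ 0 * (slice ψ 0)ᴴ + slice ψ 1 * (slice ψ 1)ᴴ =
      scalar (Fin B) (B : ℂ)⁻¹ := by
    rw [← Fin.sum_univ_two (f := fun a => slice ψ a * (slice ψ a)ᴴ), ← rho2_eq_sum_slice, h2]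
    simp [smul_one_eq_diagonal]
  have hcol : (slice ψ 0)ᴴ * slice ψ 0 + (slice ψ 1)ᴴ * slice ψ 1 =
      scalar (Fin C) (C : ℂ)⁻¹ := by
    rw [← Fin.sum_univ_two (f := fun a => (slice ψ a)ᴴ * slice ψ a),
      ← rho3_transpose_eq_sum_slice, h3]
    simp [smul_one_eq_diagonal]
  have hinv : (C : ℂ)⁻¹ ≠ (B : ℂ)⁻¹ := by
    simpa using hBC.ne'
  simpa [charpoly_natDegree_eq_dim] using Polynomial.dvd_natDegree_of_X_add_C_pow_mul_comp_eq
    (charpoly_monic _).ne_zero hinv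
    (X_add_C_pow_mul_charpoly_comp_eq _ _ _ _ hrow hcol (by simpa using hBC.le))

end Slices

section GraphState

variable {A B C : ℕ} (u : Fin A → Fin B → Fin C) (p : Fin A → Fin B → ℝ)

def graphState : Fin A × Fin B × Fin C → ℂ :=
  fun x => if x.2.2 = u x.1 x.2.1 then (√(p x.1 x.2.1) : ℂ) else 0

theorem rho1_graphState_apply (a a' : Fin A) :
    rho1 (graphState u p) a a' =
      ∑ b, if u a b = u a' b then ((√(p a b) * √(p a' b) : ℝ) : ℂ) else 0 := by
  simp only [rho1, graphState, Matrix.of_apply]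
  refine Finset.sum_congr rfl fun b _ => ?_
  by_cases h : u a b = u a' b <;> simp [h, Finset.sum_ite_eq']

theorem rho2_graphState_apply (b b' : Fin B) :
    rho2 (graphState u p) b b' =
      ∑ a, if u a b = u a b' then ((√(p a b) * √(p a b') : ℝ) : ℂ) else 0 := by
  simp only [rho2, graphState, Matrix.of_apply]
  refine Finset.sum_congr rfl fun a _ => ?_
  by_cases h : u a b = u a b' <;> simp [h, Finset.sum_ite_eq']

theorem rho3_graphState_apply (c c' : Fin C) :
    rho3 (graphState u p) c c' =
      if c = c' then ∑ a, ∑ b, if u a b = c then ((√(p a b) ^ 2 : ℝ) : ℂ) else 0 else 0 := by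
  simp only [rho3, graphState, Matrix.of_apply]
  split_ifs with h
  · subst h
    refine Finset.sum_congr rfl fun a _ => Finset.sum_congr rfl fun b _ => ?_
    by_cases hc : u a b = c
    · simp [hc, sq]
    · simp [hc, Ne.symm hc]
  · refine Finset.sum_eq_zero fun a _ => Finset.sum_eq_zero fun b _ => ?_
    by_cases hc : c = u a b
    · simp [hc, show c' ≠ u a b from hc ▸ Ne.symm h]
    · simp [hc]

variable {u p}

theorem triIsLME_graphState (hA : A ≠ 0) (hp : ∀ a b, 0 ≤ p a b)
    (hu : ∀ a, Injective (u a)) (hu' : ∀ b, Injective (u · b))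
    (hpA : ∀ a, ∑ b, p a b = 1 / A) (hpB : ∀ b, ∑ a, p a b = 1 / B)
    (hpC : ∀ c, ∑ a, ∑ b, (if u a b = c then p a b else 0) = 1 / C) :
    TriIsLME (graphState u p) := by
  have hsq : ∀ a b, √(p a b) * √(p a b) = p a b := fun a b => Real.mul_self_sqrt (hp a b)
  refine ⟨?_, ?_, ?_, ?_⟩
  · calc ∑ x, ‖graphState u p x‖ ^ 2 = ∑ a, ∑ b, p a b := by
          simp [Fintype.sum_prod_type, graphState, apply_ite, hp]
      _ = 1 := by simp [hpA, hA]
  · ext a a'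
    rw [rho1_graphState_apply]
    by_cases h : a = a'
    · subst h
      simpa [hsq] using congrArg Complex.ofReal (hpA a)
    · simp [(hu' _).ne h, h]
  · ext b b'
    rw [rho2_graphState_apply]
    by_cases h : b = b'
    · subst h
      simpa [hsq] using congrArg Complex.ofReal (hpB b)
    · simp [(hu _).ne h, h]
  · ext c c'
    rw [rho3_graphState_apply]
    by_cases h : c = c'
    · subst h
      simpa [Real.sq_sqrt (hp _ _), apply_ite Complex.ofReal] using
        congrArg Complex.ofReal (hpC c)
    · simp [h]

end GraphState

theorem Finset.sum_range_mul_div {M : Type*} [AddCommMonoid M] (f : ℕ → M) (N : ℕ) {k : ℕ}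
    (hk : 0 < k) : ∑ n ∈ Finset.range (N * k), f (n / k) = k • ∑ q ∈ Finset.range N, f q := by
  induction N with
  | zero => simp
  | succ N ih =>
    have hblock : ∀ x ∈ Finset.range k, f ((N * k + x) / k) = f N := fun x hx => by
      rw [add_comm, Nat.add_mul_div_right _ _ hk, Nat.div_eq_of_lt (Finset.mem_range.1 hx),
        zero_add]
    rw [Nat.succ_mul, Finset.sum_range_add, ih, Finset.sum_congr rfl hblock,
      Finset.sum_range_succ, smul_add, Finset.sum_const, Finset.card_range]

theorem Fin.sum_ite_val_add_eq {M : Type*} [AddCommMonoid M] {n : ℕ} (k c : ℕ) (f : ℕ → M) :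
    ∑ b : Fin n, (if (b : ℕ) + k = c then f b else 0) =
      if k ≤ c ∧ c - k < n then f (c - k) else 0 := by
  rw [Fin.sum_univ_eq_sum_range (fun b => if b + k = c then f b else 0)]
  split_ifs with h
  · rw [Finset.sum_congr rfl fun b _ => if_congr (show b + k = c ↔ b = c - k by omega) rfl rfl,
      Finset.sum_ite_eq', if_pos (Finset.mem_range.2 h.2)]
  · exact Finset.sum_eq_zero fun b hb => if_neg (by simp at hb; omega)

section Constructions

variable {B : ℕ}

theorem triLMEExists_two_self (hB : 2 ≤ B) : TriLMEExists 2 B B := by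
  obtain ⟨n, rfl⟩ : ∃ n, B = n + 2 := ⟨B - 2, by omega⟩
  have hrot : ∀ b, finRotate (n + 2) b ≠ b := fun b =>
    Equiv.Perm.mem_support.1 (support_finRotate ▸ Finset.mem_univ b)
  refine ⟨_, triIsLME_graphState (u := fun a => ⇑(finRotate (n + 2) ^ (a : ℕ)))
    (p := fun _ _ => 1 / (2 * (n + 2 : ℕ))) two_ne_zero (fun _ _ => by positivity)
    (fun a => (finRotate _ ^ _).injective) ?_ ?_ ?_ ?_⟩
  · intro b a a' h
    fin_cases a <;> fin_cases a' <;> simp_all [eq_comm]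
  · intro a
    simp only [Finset.sum_const, Finset.card_univ, Fintype.card_fin, nsmul_eq_mul,
      Nat.cast_ofNat]
    field_simp
  · intro b
    simp only [Finset.sum_const, Finset.card_univ, Fintype.card_fin, nsmul_eq_mul,
      Nat.cast_ofNat]
    field_simp
  · intro c
    simp only [← Equiv.eq_symm_apply, Finset.sum_ite_eq', Finset.mem_univ, if_true,
      Finset.sum_const, Finset.card_univ, Fintype.card_fin, nsmul_eq_mul, Nat.cast_ofNat]
    field_simp

variable {N k : ℕ}

/-- Row `b = q k + r` puts weight `N - q` on column `b` and `q + 1` on column `b + k`, so that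
every column collects the same total `N` (up to the normalisation `N (N + 1) k`). -/
def staircaseWeight (N k : ℕ) (a : Fin 2) (n : ℕ) : ℝ :=
  ![(N : ℝ) - (n / k : ℕ), (n / k : ℕ) + 1] a / (N * (N + 1) * k)

theorem staircaseWeight_zero (n : ℕ) :
    staircaseWeight N k 0 n = ((N : ℝ) - (n / k : ℕ)) / (N * (N + 1) * k) := rfl

theorem staircaseWeight_one (n : ℕ) :
    staircaseWeight N k 1 n = (((n / k : ℕ) : ℝ) + 1) / (N * (N + 1) * k) := rfl

theorem staircaseWeight_nonneg {n : ℕ} (hn : n < N * k) (a : Fin 2) :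
    0 ≤ staircaseWeight N k a n := by
  have hq : ((n / k : ℕ) : ℝ) ≤ N := by
    exact_mod_cast (Nat.div_lt_of_lt_mul (lt_of_lt_of_eq hn (mul_comm N k))).le
  revert a
  refine Fin.forall_fin_two.2 ⟨?_, ?_⟩
  · rw [staircaseWeight_zero]
    exact div_nonneg (by linarith) (by positivity)
  · rw [staircaseWeight_one]
    positivity

theorem sum_staircaseWeight (hN : 0 < N) (hk : 0 < k) (a : Fin 2) :
    ∑ b : Fin (N * k), staircaseWeight N k a b = 1 / 2 := by
  have gauss : ∀ M : ℕ, ∑ q ∈ Finset.range M, (q : ℝ) = M * (M - 1) / 2 := fun M => by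
    induction M with
    | zero => simp
    | succ M ih => rw [Finset.sum_range_succ, ih]; push_cast; ring
  have hrows : ∑ n ∈ Finset.range (N * k), ((n / k : ℕ) : ℝ) = k * (N * (N - 1) / 2) := by
    rw [Finset.sum_range_mul_div (fun q => (q : ℝ)) N hk, gauss, nsmul_eq_mul]
  rw [Fin.sum_univ_eq_sum_range (staircaseWeight N k a)]
  revert a
  refine Fin.forall_fin_two.2 ⟨?_, ?_⟩
  · simp only [staircaseWeight_zero, ← Finset.sum_div, Finset.sum_sub_distrib, hrows,
      Finset.sum_const, Finset.card_range, nsmul_eq_mul]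
    field_simp
    push_cast
    ring
  · simp only [staircaseWeight_one, ← Finset.sum_div, Finset.sum_add_distrib, hrows,
      Finset.sum_const, Finset.card_range, nsmul_eq_mul]
    field_simp
    push_cast
    ring

theorem staircaseWeight_zero_add_one (hN : 0 < N) (hk : 0 < k) (n : ℕ) :
    staircaseWeight N k 0 n + staircaseWeight N k 1 n = 1 / (N * k : ℕ) := by
  rw [staircaseWeight_zero, staircaseWeight_one]
  field_simp
  push_cast
  ring

theorem sum_staircaseWeight_column (hN : 0 < N) (hk : 0 < k) {c : ℕ} (hc : c < (N + 1) * k) :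
    ∑ a : Fin 2, (if (a : ℕ) * k ≤ c ∧ c - a * k < N * k then
      staircaseWeight N k a (c - a * k) else 0) = 1 / ((N + 1) * k : ℕ) := by
  have hkN : k ≤ N * k := Nat.le_mul_of_pos_left k hN
  have hc' : c < N * k + k := by rwa [Nat.succ_mul] at hc
  simp only [Fin.sum_univ_two, Fin.val_zero, Fin.val_one, zero_mul, one_mul, Nat.sub_zero,
    zero_le, true_and]
  split_ifs with h0 h1 h1
  · have hsucc : (c - k) / k + 1 = c / k := by
      rw [← Nat.add_div_right _ hk, Nat.sub_add_cancel h1.1]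
    rw [staircaseWeight_zero, staircaseWeight_one, ← hsucc]
    field_simp
    push_cast
    ring
  · rw [staircaseWeight_zero, Nat.div_eq_of_lt (show c < k by omega)]
    field_simp
    push_cast
    ring
  · have hsucc : (c - k) / k + 1 = N := by
      rw [← Nat.add_div_right _ hk, Nat.sub_add_cancel h1.1, Nat.div_eq_of_lt_le (by omega) hc]
    rw [staircaseWeight_one, ← Nat.cast_add_one, hsucc]
    field_simp
    push_cast
    ring
  · omega

theorem triLMEExists_two_mul_succ_mul (hN : 0 < N) (hk : 0 < k) :
    TriLMEExists 2 (N * k) ((N + 1) * k) := by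
  have hbound : ∀ (a : Fin 2) (b : Fin (N * k)), (b : ℕ) + a * k < (N + 1) * k := fun a b => by
    have := b.isLt
    have := Nat.mul_le_mul_right k (show (a : ℕ) ≤ 1 by omega)
    rw [Nat.succ_mul]; omega
  refine ⟨_, triIsLME_graphState (u := fun a b => ⟨b + a * k, hbound a b⟩)
    (p := fun a b => staircaseWeight N k a b) two_ne_zero
    (fun a b => staircaseWeight_nonneg b.isLt a)
    ?_ ?_ (sum_staircaseWeight hN hk) ?_ ?_⟩
  · intro a b b' h
    exact Fin.ext (Nat.add_right_cancel (congrArg Fin.val h))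
  · intro b a a' h
    exact Fin.ext (Nat.eq_of_mul_eq_mul_right hk (Nat.add_left_cancel (congrArg Fin.val h)))
  · intro b
    rw [Fin.sum_univ_two, staircaseWeight_zero_add_one hN hk]
  · intro c
    simp only [Fin.ext_iff, Fin.sum_ite_val_add_eq]
    exact sum_staircaseWeight_column hN hk c.isLt

end Constructions

/-- existence of tripartite LME states for dimensions (2, B, C). -/
theorem tripartite_2BC_exists_iff (B C : ℕ) (hB : 2 ≤ B) (hBC : B ≤ C) :
    TriLMEExists 2 B C ↔
      B = C ∨ ∃ N k : ℕ, 1 ≤ N ∧ 1 ≤ k ∧ 2 ≤ N * k ∧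
        B = N * k ∧ C = (N + 1) * k := by
  constructor
  · intro h
    rcases hBC.eq_or_lt with rfl | hlt
    · exact Or.inl rfl
    obtain ⟨N, hN⟩ := sub_dvd_of_triLMEExists hlt h
    have hpos : 0 < N := Nat.pos_of_ne_zero fun h0 => by simp [h0] at hN; omega
    refine Or.inr ⟨N, C - B, hpos, by omega, ?_, by rw [mul_comm, ← hN], ?_⟩
    · rw [mul_comm, ← hN]; exact hB
    · rw [Nat.succ_mul, mul_comm, ← hN]; omega
  · rintro (rfl | ⟨N, k, hN, hk, -, rfl, rfl⟩)
    · exact triLMEExists_two_self hB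
    · exact triLMEExists_two_mul_succ_mul hN hk
end
end

section
/- Let B ≥ 2 and let θ, φ : Fin B → ℝ satisfy ∑_i cos (θ i) = 0, ∑_i sin (θ i) · cos (φ i) = 0 and ∑_i sin (θ i) · sin (φ i) = 0. Then the state ψ : Fin 2 × Fin B × Fin B → ℂ defined by ψ(0, i, i) = (1/√B) · cos (θ i / 2), ψ(1, i, i) = (1/√B) · exp(I · φ i) · sin (θ i / 2), and ψ = 0 whenever the second and third indices differ, is a normalized locally maximally entangled state for dimensions (2, B, B). -/
/-!
Up to the factor `1 / √B`, the state is `∑ b, u b ⊗ e b ⊗ e b`, where `u b` is the qubit with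
Bloch angles `(θ b, φ b)`. Since every `u b` is a unit vector, the two `B`-dimensional marginals
are `1 / B`. The qubit marginal is `(1 / B) ∑ b, u b (u b)ᴴ`, and `u uᴴ = (1 + n • σ) / 2` for the
Bloch vector `n` of `u`, so this is `1 / 2` exactly when the Bloch vectors sum to zero, which is
what the three hypotheses say.
-/

open scoped ComplexConjugate

noncomputable section

/-- The diagonal (2,B,B) state determined by angles θ, φ. -/
def psi0 (B : ℕ) (θ φ : Fin B → ℝ) : Fin 2 × Fin B × Fin B → ℂ :=
  fun x =>
    if x.2.1 = x.2.2 then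
      (if x.1 = 0 then (((1 / Real.sqrt B) * Real.cos (θ x.2.1 / 2) : ℝ) : ℂ)
       else ((1 / Real.sqrt B : ℝ) : ℂ) * Complex.exp (Complex.I * (φ x.2.1 : ℝ)) *
         ((Real.sin (θ x.2.1 / 2) : ℝ) : ℂ))
    else 0

open Matrix

section DiagonalState

variable {A B : ℕ}

def diagState (v : Fin B → Fin A → ℂ) : Fin A × Fin B × Fin B → ℂ :=
  fun x => if x.2.1 = x.2.2 then v x.2.1 x.1 else 0

variable (v : Fin B → Fin A → ℂ)

theorem sum_norm_sq_diagState :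
    ∑ x, ‖diagState v x‖ ^ 2 = ∑ b, ∑ a, ‖v b a‖ ^ 2 := by
  rw [Fintype.sum_prod_type, Finset.sum_comm]
  simp [Fintype.sum_prod_type, diagState, apply_ite]

theorem rho1_diagState : rho1 (diagState v) = ∑ b, vecMulVec (v b) (star (v b)) := by
  ext a a'
  simp [rho1, diagState, Matrix.sum_apply, vecMulVec_apply, apply_ite]

theorem rho2_diagState :
    rho2 (diagState v) = diagonal fun b => ∑ a, (‖v b a‖ : ℂ) ^ 2 := by
  ext b b'
  obtain rfl | h := eq_or_ne b b'
  · simp [rho2, diagState, Complex.mul_conj']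
  · simp [rho2, diagState, h, apply_ite]

theorem rho3_diagState :
    rho3 (diagState v) = diagonal fun b => ∑ a, (‖v b a‖ : ℂ) ^ 2 := by
  ext c c'
  obtain rfl | h := eq_or_ne c c'
  · simp [rho3, diagState, Complex.mul_conj']
  · simp [rho3, diagState, h, h.symm, apply_ite]

theorem triIsLME_diagState (hB : B ≠ 0) (hnorm : ∀ b, ∑ a, ‖v b a‖ ^ 2 = 1 / B)
    (hmix : ∑ b, vecMulVec (v b) (star (v b)) = (1 / (A : ℂ)) • 1) :
    TriIsLME (diagState v) := by
  have hdiag : (diagonal fun b => ∑ a, (‖v b a‖ : ℂ) ^ 2) = (1 / (B : ℂ)) • 1 := by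
    rw [smul_one_eq_diagonal]
    congr 1
    funext b
    have h := congrArg ((↑) : ℝ → ℂ) (hnorm b)
    push_cast at h
    exact h
  refine ⟨?_, rho1_diagState v ▸ hmix, rho2_diagState v ▸ hdiag, rho3_diagState v ▸ hdiag⟩
  rw [TriNormalized, sum_norm_sq_diagState, Finset.sum_congr rfl fun b _ => hnorm b]
  simp [hB]

theorem triIsLME_diagState_smul (u : Fin B → Fin A → ℂ) (hB : B ≠ 0)
    (hunit : ∀ b, ∑ a, ‖u b a‖ ^ 2 = 1)
    (hmix : ∑ b, vecMulVec (u b) (star (u b)) = ((B : ℂ) / A) • 1) :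
    TriIsLME (diagState fun b => (1 / Real.sqrt B) • u b) := by
  have hsq : (1 / Real.sqrt B) ^ 2 = 1 / B := by
    rw [div_pow, one_pow, Real.sq_sqrt (Nat.cast_nonneg B)]
  apply triIsLME_diagState _ hB
  · intro b
    simp_rw [Pi.smul_apply, norm_smul, mul_pow, ← Finset.mul_sum, hunit, Real.norm_eq_abs, sq_abs,
      hsq, mul_one]
  · simp_rw [star_smul, star_trivial, smul_vecMulVec, vecMulVec_smul, smul_smul, ← Finset.smul_sum,
      hmix]
    rw [← sq, hsq, ← algebraMap_smul ℂ, smul_smul]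
    congr 1
    simp only [one_div, map_inv₀, map_natCast]
    field_simp

end DiagonalState

section Bloch

open Complex

def blochState (θ φ : ℝ) : Fin 2 → ℂ :=
  ![Real.cos (θ / 2), exp (φ * I) * Real.sin (θ / 2)]

def blochVector (θ φ : ℝ) : Fin 3 → ℝ :=
  ![Real.sin θ * Real.cos φ, Real.sin θ * Real.sin φ, Real.cos θ]

def pauli : Fin 3 → Matrix (Fin 2) (Fin 2) ℂ :=
  ![!![0, 1; 1, 0], !![0, -I; I, 0], !![1, 0; 0, -1]]

theorem sum_norm_sq_blochState (θ φ : ℝ) : ∑ a, ‖blochState θ φ a‖ ^ 2 = 1 := by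
  simp only [blochState, Fin.sum_univ_two, Matrix.cons_val_zero, Matrix.cons_val_one, norm_mul,
    norm_exp_ofReal_mul_I, norm_real, Real.norm_eq_abs, one_mul, sq_abs, Real.cos_sq_add_sin_sq]

theorem vecMulVec_blochState (θ φ : ℝ) :
    vecMulVec (blochState θ φ) (star (blochState θ φ)) =
      (1 / 2 : ℂ) • (1 + ∑ i, (blochVector θ φ i : ℂ) • pauli i) := by
  obtain ⟨t, rfl⟩ : ∃ t, θ = 2 * t := ⟨θ / 2, by ring⟩
  have hφ : (Real.cos φ : ℂ) ^ 2 + (Real.sin φ : ℂ) ^ 2 = 1 := by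
    exact_mod_cast Real.cos_sq_add_sin_sq φ
  have ht : (Real.cos t : ℂ) ^ 2 + (Real.sin t : ℂ) ^ 2 = 1 := by
    exact_mod_cast Real.cos_sq_add_sin_sq t
  ext i j
  fin_cases i <;> fin_cases j <;>
    simp only [Fin.zero_eta, Fin.mk_one, Fin.isValue, blochState, blochVector, pauli,
      exp_ofReal_mul_I, mul_div_cancel_left₀ t two_ne_zero, Real.sin_two_mul, Real.cos_two_mul,
      vecMulVec_apply, Pi.star_apply, star_mul', star_add, Complex.star_def, conj_ofReal, conj_I,
      Fin.sum_univ_three, Matrix.smul_apply, Matrix.add_apply, Matrix.one_fin_two,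
      Matrix.cons_val_zero, Matrix.cons_val_one, Matrix.cons_val_two, Matrix.of_apply,
      Matrix.cons_val', Matrix.empty_val', Matrix.cons_val_fin_one, smul_eq_mul,
      Matrix.head_cons, Matrix.tail_cons, ofReal_mul, ofReal_sub, ofReal_pow, ofReal_ofNat,
      ofReal_one]
  · ring
  · ring
  · ring
  · linear_combination (Real.sin t : ℂ) ^ 2 * hφ + ht - (Real.sin t * Real.sin φ : ℂ) ^ 2 * I_sq

theorem sum_vecMulVec_blochState {B : ℕ} (θ φ : Fin B → ℝ)
    (h : ∑ b, blochVector (θ b) (φ b) = 0) :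
    ∑ b, vecMulVec (blochState (θ b) (φ b)) (star (blochState (θ b) (φ b))) =
      ((B : ℂ) / 2) • 1 := by
  have hpauli : ∑ b, ∑ i, (blochVector (θ b) (φ b) i : ℂ) • pauli i = 0 := by
    rw [Finset.sum_comm]
    refine Finset.sum_eq_zero fun i _ => ?_
    rw [← Finset.sum_smul, ← ofReal_sum, ← Finset.sum_apply, h]
    simp
  simp_rw [vecMulVec_blochState, ← Finset.smul_sum, Finset.sum_add_distrib, hpauli]
  rw [add_zero, Finset.sum_const, Finset.card_univ, Fintype.card_fin, ← Nat.cast_smul_eq_nsmul ℂ,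
    smul_smul, one_div_mul_eq_div]

theorem sum_blochVector_eq_zero {B : ℕ} {θ φ : Fin B → ℝ}
    (h1 : ∑ i, Real.cos (θ i) = 0)
    (h2 : ∑ i, Real.sin (θ i) * Real.cos (φ i) = 0)
    (h3 : ∑ i, Real.sin (θ i) * Real.sin (φ i) = 0) :
    ∑ b, blochVector (θ b) (φ b) = 0 := by
  ext i
  fin_cases i <;> simp [blochVector, Finset.sum_apply, h1, h2, h3]

end Bloch

theorem psi0_eq_diagState (B : ℕ) (θ φ : Fin B → ℝ) :
    psi0 B θ φ = diagState fun b => (1 / Real.sqrt B) • blochState (θ b) (φ b) := by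
  ext ⟨a, b, c⟩
  fin_cases a <;>
    simp [psi0, diagState, blochState, Complex.real_smul, mul_assoc, mul_comm Complex.I]

/-- the diagonal states built from unit vectors in ℝ³ summing to
zero are LME states for dimensions (2, B, B). -/
theorem lme_2BB_construction (B : ℕ) (hB : 2 ≤ B) (θ φ : Fin B → ℝ)
    (h1 : ∑ i, Real.cos (θ i) = 0)
    (h2 : ∑ i, Real.sin (θ i) * Real.cos (φ i) = 0)
    (h3 : ∑ i, Real.sin (θ i) * Real.sin (φ i) = 0) :
    TriIsLME (psi0 B θ φ) := by
  rw [psi0_eq_diagState]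
  refine triIsLME_diagState_smul _ (by omega) (fun b => sum_norm_sq_blochState _ _) ?_
  rw [sum_vecMulVec_blochState θ φ (sum_blochVector_eq_zero h1 h2 h3)]
  norm_num
end
end

section
/- Let d_A, d_B ≥ 1 and let ψ : Fin d_A × Fin d_B → ℂ be a normalized bipartite state. Let H be a group and u : H →* unitaryGroup (Fin d_A) ℂ, v : H →* unitaryGroup (Fin d_B) ℂ be group homomorphisms such that the action of u is irreducible, i.e. the only ℂ-submodules W of (Fin d_A → ℂ) with (u h).mulVecLin '' W ⊆ W for all h ∈ H are ⊥ and ⊤. Suppose that for every h ∈ H there exists c ∈ ℂ with ‖c‖ = 1 such that ∑_{a',b'} (u h) a a' · (v h) b b' · ψ(a',b') = c · ψ(a,b) for all (a,b). Then the reduced density matrix ρ_A(ψ), with entries ρ_A(ψ) a a' = ∑_b ψ(a,b) * conj (ψ(a',b)), equals (1/d_A) • 1. -/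
open scoped ComplexConjugate

noncomputable section

def rhoA {d₁ d₂ : ℕ} (ψ : Fin d₁ × Fin d₂ → ℂ) : Matrix (Fin d₁) (Fin d₁) ℂ :=
  Matrix.of fun a a' => ∑ b, ψ (a, b) * conj (ψ (a', b))

def rhoB {d₁ d₂ : ℕ} (ψ : Fin d₁ × Fin d₂ → ℂ) : Matrix (Fin d₂) (Fin d₂) ℂ :=
  Matrix.of fun b b' => ∑ a, ψ (a, b) * conj (ψ (a, b'))

def BiNormalized {d₁ d₂ : ℕ} (ψ : Fin d₁ × Fin d₂ → ℂ) : Prop :=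
  ∑ x, ‖ψ x‖ ^ 2 = 1

def BiIsLME {d₁ d₂ : ℕ} (ψ : Fin d₁ × Fin d₂ → ℂ) : Prop :=
  BiNormalized ψ ∧ rhoA ψ = (1 / (d₁ : ℂ)) • 1 ∧ rhoB ψ = (1 / (d₂ : ℂ)) • 1

def BiLMEExists (d₁ d₂ : ℕ) : Prop := ∃ ψ : Fin d₁ × Fin d₂ → ℂ, BiIsLME ψ

/-- A unitary representation is irreducible if the only invariant subspaces are
trivial. -/
def IsIrreducibleRep {m : ℕ} {H : Type*} [Group H]
    (u : H →* Matrix.unitaryGroup (Fin m) ℂ) : Prop :=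
  ∀ W : Submodule ℂ (Fin m → ℂ),
    (∀ h : H, ∀ w ∈ W, Matrix.mulVec (u h : Matrix (Fin m) (Fin m) ℂ) w ∈ W) →
    W = ⊥ ∨ W = ⊤

/-!
Write ψ as the `dA × dB` coefficient matrix `Ψ`, so that `ρ_A = Ψ Ψᴴ`. Invariance up to the phase
`c` reads `U Ψ Vᵀ = c Ψ`; since `Vᵀ` is unitary and `|c| = 1` this gives `U ρ_A Uᴴ = ρ_A`, i.e. `ρ_A`
commutes with the irreducible representation `u`. By Schur's lemma `ρ_A` is a scalar `μ`, and
`tr ρ_A = ‖ψ‖² = 1` forces `μ = 1 / dA`.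
-/

open Matrix

def coeffMatrix {d₁ d₂ : ℕ} (ψ : Fin d₁ × Fin d₂ → ℂ) : Matrix (Fin d₁) (Fin d₂) ℂ :=
  Matrix.of fun a b => ψ (a, b)

theorem rhoA_eq_coeffMatrix_mul_conjTranspose {d₁ d₂ : ℕ} (ψ : Fin d₁ × Fin d₂ → ℂ) :
    rhoA ψ = coeffMatrix ψ * (coeffMatrix ψ)ᴴ := by
  ext a a'
  simp [rhoA, coeffMatrix, Matrix.mul_apply]

theorem mul_coeffMatrix_mul_transpose_apply {d₁ d₂ : ℕ} (ψ : Fin d₁ × Fin d₂ → ℂ)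
    (U : Matrix (Fin d₁) (Fin d₁) ℂ) (V : Matrix (Fin d₂) (Fin d₂) ℂ) (a : Fin d₁) (b : Fin d₂) :
    (U * coeffMatrix ψ * Vᵀ) a b = ∑ a', ∑ b', U a a' * V b b' * ψ (a', b') := by
  simp only [Matrix.mul_apply, transpose_apply, coeffMatrix, of_apply, Finset.sum_mul]
  rw [Finset.sum_comm]
  exact Finset.sum_congr rfl fun _ _ => Finset.sum_congr rfl fun _ _ => by ring

theorem BiNormalized.trace_rhoA {d₁ d₂ : ℕ} {ψ : Fin d₁ × Fin d₂ → ℂ} (hψ : BiNormalized ψ) :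
    (rhoA ψ).trace = 1 := by
  have hsum : ∑ x, ((‖ψ x‖ ^ 2 : ℝ) : ℂ) = 1 := by exact_mod_cast hψ
  simpa [trace, rhoA, Fintype.sum_prod_type, Complex.mul_conj, Complex.normSq_eq_norm_sq]
    using hsum

theorem Matrix.commute_mul_conjTranspose_of_mul_mul_transpose_eq_smul
    {m n : Type*} [Fintype m] [Fintype n] [DecidableEq m] [DecidableEq n]
    {U : Matrix m m ℂ} {V : Matrix n n ℂ} {Ψ : Matrix m n ℂ} {c : ℂ}
    (hU : U ∈ unitaryGroup m ℂ) (hV : V ∈ unitaryGroup n ℂ) (hc : ‖c‖ = 1)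
    (hΨ : U * Ψ * Vᵀ = c • Ψ) : Commute U (Ψ * Ψᴴ) := by
  have hVt : Vᵀ * Vᵀᴴ = 1 := Unitary.mul_star_self_of_mem (transpose_mem_unitaryGroup_iff.2 hV)
  have hcc : c * star c = 1 := by
    rw [Complex.star_def, Complex.mul_conj', hc]; norm_num
  have hconj : U * (Ψ * Ψᴴ) * Uᴴ = Ψ * Ψᴴ := calc
    U * (Ψ * Ψᴴ) * Uᴴ = U * Ψ * (Vᵀ * Vᵀᴴ) * (U * Ψ)ᴴ := by
      simp only [hVt, conjTranspose_mul, Matrix.mul_one, Matrix.mul_assoc]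
    _ = (c • Ψ) * (c • Ψ)ᴴ := by
      rw [← hΨ]; simp only [conjTranspose_mul, Matrix.mul_assoc]
    _ = Ψ * Ψᴴ := by
      rw [conjTranspose_smul, Matrix.smul_mul, Matrix.mul_smul, smul_smul, hcc, one_smul]
  have hUU : Uᴴ * U = 1 := Unitary.star_mul_self_of_mem hU
  calc U * (Ψ * Ψᴴ) = U * (Ψ * Ψᴴ) * Uᴴ * U := by rw [Matrix.mul_assoc _ Uᴴ, hUU, Matrix.mul_one]
    _ = Ψ * Ψᴴ * U := by rw [hconj]

theorem IsIrreducibleRep.exists_eq_smul_one {m : ℕ} {H : Type*} [Group H]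
    {u : H →* unitaryGroup (Fin m) ℂ} (hirr : IsIrreducibleRep u)
    (M : Matrix (Fin m) (Fin m) ℂ) (hM : ∀ h, Commute (u h : Matrix (Fin m) (Fin m) ℂ) M) :
    ∃ μ : ℂ, M = μ • 1 := by
  cases isEmpty_or_nonempty (Fin m)
  · exact ⟨0, Subsingleton.elim _ _⟩
  obtain ⟨μ, hμ⟩ := Module.End.exists_eigenvalue (toLin' M)
  have hinv : ∀ h, ∀ w ∈ Module.End.eigenspace (toLin' M) μ,
      (u h : Matrix (Fin m) (Fin m) ℂ) *ᵥ w ∈ Module.End.eigenspace (toLin' M) μ := by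
    intro h w hw
    rw [Module.End.mem_eigenspace_iff, toLin'_apply] at hw ⊢
    rw [mulVec_mulVec, ← (hM h).eq, ← mulVec_mulVec, hw, mulVec_smul]
  have htop := (hirr _ hinv).resolve_left (Module.End.hasEigenvalue_iff.1 hμ)
  refine ⟨μ, toLin'.injective (LinearMap.ext fun w => ?_)⟩
  have hw : w ∈ Module.End.eigenspace (toLin' M) μ := htop ▸ Submodule.mem_top
  simpa using Module.End.mem_eigenspace_iff.1 hw

theorem rep_invariant_maximally_mixed_general (dA dB : ℕ)
    (ψ : Fin dA × Fin dB → ℂ) (hψ : BiNormalized ψ)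
    (H : Type*) [Group H]
    (u : H →* Matrix.unitaryGroup (Fin dA) ℂ)
    (v : H →* Matrix.unitaryGroup (Fin dB) ℂ)
    (hirr : IsIrreducibleRep u)
    (hinv : ∀ h : H, ∃ c : ℂ, ‖c‖ = 1 ∧ ∀ a b,
      ∑ a', ∑ b', (u h : Matrix (Fin dA) (Fin dA) ℂ) a a' *
          (v h : Matrix (Fin dB) (Fin dB) ℂ) b b' * ψ (a', b') = c * ψ (a, b)) :
    rhoA ψ = (1 / (dA : ℂ)) • 1 := by
  have hcomm : ∀ h, Commute (u h : Matrix (Fin dA) (Fin dA) ℂ) (rhoA ψ) := by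
    intro h
    obtain ⟨c, hc, hψh⟩ := hinv h
    rw [rhoA_eq_coeffMatrix_mul_conjTranspose]
    refine commute_mul_conjTranspose_of_mul_mul_transpose_eq_smul (u h).2 (v h).2 hc ?_
    ext a b
    rw [mul_coeffMatrix_mul_transpose_apply, hψh]
    rfl
  obtain ⟨μ, hμ⟩ := hirr.exists_eq_smul_one (rhoA ψ) hcomm
  have htrace : μ * dA = 1 := by
    simpa [hμ] using hψ.trace_rhoA
  rw [hμ, ← eq_one_div_of_mul_eq_one_left htrace]

/-- if a normalized bipartite state is invariant up to a phase
under a product representation acting irreducibly on the first factor, then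
the first reduced density matrix is maximally mixed. -/
theorem rep_invariant_maximally_mixed (dA dB : ℕ) (hA : 1 ≤ dA) (hB : 1 ≤ dB)
    (ψ : Fin dA × Fin dB → ℂ) (hψ : BiNormalized ψ)
    (H : Type*) [Group H]
    (u : H →* Matrix.unitaryGroup (Fin dA) ℂ)
    (v : H →* Matrix.unitaryGroup (Fin dB) ℂ)
    (hirr : IsIrreducibleRep u)
    (hinv : ∀ h : H, ∃ c : ℂ, ‖c‖ = 1 ∧ ∀ a b,
      ∑ a', ∑ b', (u h : Matrix (Fin dA) (Fin dA) ℂ) a a' *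
          (v h : Matrix (Fin dB) (Fin dB) ℂ) b b' * ψ (a', b') = c * ψ (a, b)) :
    rhoA ψ = (1 / (dA : ℂ)) • 1 :=
  rep_invariant_maximally_mixed_general dA dB ψ hψ H u v hirr hinv
end
end

section
/- Let H be a group, d : Fin n → ℕ with d i ≥ 1, and for each i : Fin n let u_i : H →* unitaryGroup (Fin (d i)) ℂ be a group homomorphism that is irreducible (the only invariant subspaces of (Fin (d i) → ℂ) under all u_i h are ⊥ and ⊤). Suppose ψ : (∀ i, Fin (d i)) → ℂ is nonzero and invariant under the tensor product action: for all h ∈ H and all x, ∑_y (∏_i (u_i h) (x i) (y i)) · ψ(y) = ψ(x). Then ψ / ‖ψ‖ (the state obtained by dividing ψ by its ℓ² norm) is locally maximally entangled. -/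
open scoped ComplexConjugate

noncomputable section

/-!
Since `ψ` is fixed by `⊗ᵢ uᵢ(h)`, its `k`-th flattening `Ψ` (rows indexed by the `k`-th factor,
columns by all the others) satisfies `Ψ = u_k(h) Ψ Vᵀ`, where `V` is the tensor product of the
remaining `uᵢ(h)` and hence unitary. So `ρ_k = Ψ Ψᴴ = u_k(h) ρ_k u_k(h)ᴴ` commutes with the
irreducible representation `u_k`, and by Schur's lemma it is a scalar `c`. Taking traces gives
`c d_k = ‖ψ‖²`, and normalizing `ψ` divides `ρ_k` by `‖ψ‖²`.
-/

namespace Matrix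

open scoped Kronecker

section piKronecker

variable {ι R : Type*} [Fintype ι] [CommRing R] {α β γ : ι → Type*}

def piKronecker (M : ∀ i, Matrix (α i) (β i) R) : Matrix (∀ i, α i) (∀ i, β i) R :=
  of fun x y => ∏ i, M i (x i) (y i)

@[simp]
theorem piKronecker_apply (M : ∀ i, Matrix (α i) (β i) R) (x : ∀ i, α i) (y : ∀ i, β i) :
    piKronecker M x y = ∏ i, M i (x i) (y i) :=
  rfl

theorem conjTranspose_piKronecker [StarRing R] (M : ∀ i, Matrix (α i) (β i) R) :
    (piKronecker M)ᴴ = piKronecker fun i => (M i)ᴴ := by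
  ext
  simp [star_prod]

theorem piKronecker_one [∀ i, DecidableEq (α i)] :
    piKronecker (fun i => (1 : Matrix (α i) (α i) R)) = 1 := by
  ext x y
  simp only [piKronecker_apply, one_apply, Fintype.prod_ite_zero, Finset.prod_const_one,
    funext_iff]

variable [DecidableEq ι]

theorem piKronecker_mul [∀ i, Fintype (β i)] (M : ∀ i, Matrix (α i) (β i) R)
    (N : ∀ i, Matrix (β i) (γ i) R) :
    piKronecker M * piKronecker N = piKronecker fun i => M i * N i := by
  ext x z
  simp only [mul_apply, piKronecker_apply, ← Finset.prod_mul_distrib, Fintype.prod_sum]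

theorem piKronecker_mem_unitaryGroup [StarRing R] [∀ i, Fintype (α i)] [∀ i, DecidableEq (α i)]
    {M : ∀ i, Matrix (α i) (α i) R} (hM : ∀ i, M i ∈ unitaryGroup (α i) R) :
    piKronecker M ∈ unitaryGroup (∀ i, α i) R := by
  rw [mem_unitaryGroup_iff', star_eq_conjTranspose, conjTranspose_piKronecker, piKronecker_mul]
  simp only [← star_eq_conjTranspose, fun i => mem_unitaryGroup_iff'.mp (hM i), piKronecker_one]

/-- The `prodComm` matches the `(column, row)` indexing of `Matrix.vec`. -/
theorem piKronecker_submatrix_piSplitAt (k : ι) (M : ∀ i, Matrix (α i) (β i) R) :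
    (piKronecker M).submatrix ((Equiv.piSplitAt k α).trans (Equiv.prodComm _ _)).symm
        ((Equiv.piSplitAt k β).trans (Equiv.prodComm _ _)).symm =
      piKronecker (fun j : {j // j ≠ k} => M j) ⊗ₖ M k := by
  ext ⟨r, a⟩ ⟨s, b⟩
  rw [submatrix_apply, piKronecker_apply, Fintype.prod_eq_mul_prod_subtype_ne _ k, mul_comm]
  congr 1
  · exact Finset.prod_congr rfl fun j _ => by simp [dif_neg j.2]
  · simp

end piKronecker

theorem commute_mul_conjTranspose_of_mul_mul_transpose_eq {m n R : Type*} [Fintype m]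
    [DecidableEq m] [Fintype n] [DecidableEq n] [CommRing R] [StarRing R]
    {A : Matrix m m R} {B : Matrix n n R} {X : Matrix m n R} (hA : A ∈ unitaryGroup m R)
    (hB : B ∈ unitaryGroup n R) (hX : A * X * Bᵀ = X) :
    Commute A (X * Xᴴ) := by
  have hA' : Aᴴ * A = 1 := mem_unitaryGroup_iff'.mp hA
  have hBt : Bᵀ * Bᵀᴴ = 1 := mem_unitaryGroup_iff.mp (transpose_mem_unitaryGroup_iff.mpr hB)
  calc A * (X * Xᴴ) = A * X * (Bᵀ * Bᵀᴴ) * Xᴴ * Aᴴ * A := by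
        rw [hBt, Matrix.mul_one, Matrix.mul_assoc _ Aᴴ, hA', Matrix.mul_one, Matrix.mul_assoc]
    _ = (A * X * Bᵀ) * (A * X * Bᵀ)ᴴ * A := by
        simp only [conjTranspose_mul, Matrix.mul_assoc]
    _ = X * Xᴴ * A := by rw [hX]

end Matrix

open Matrix

section flattening

variable {ι R : Type*} [DecidableEq ι] {α : ι → Type*}

theorem update_piSplitAt_symm (k : ι) (a b : α k) (r : ∀ j : {j // j ≠ k}, α j) :
    Function.update ((Equiv.piSplitAt k α).symm (a, r)) k b =
      (Equiv.piSplitAt k α).symm (b, r) := by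
  apply (Equiv.piSplitAt k α).injective
  ext j
  · simp
  · simp [Function.update_of_ne j.2, dif_neg j.2]

def flattening (k : ι) (ψ : (∀ i, α i) → R) : Matrix (α k) (∀ j : {j // j ≠ k}, α j) R :=
  of fun a r => ψ ((Equiv.piSplitAt k α).symm (a, r))

theorem vec_flattening (k : ι) (ψ : (∀ i, α i) → R) :
    vec (flattening k ψ) = ψ ∘ ((Equiv.piSplitAt k α).trans (Equiv.prodComm _ _)).symm :=
  rfl

theorem mul_flattening_mul_transpose [Fintype ι] [∀ i, Fintype (α i)] [CommRing R] (k : ι)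
    {M : ∀ i, Matrix (α i) (α i) R} {ψ : (∀ i, α i) → R} (hψ : piKronecker M *ᵥ ψ = ψ) :
    M k * flattening k ψ * (piKronecker fun j : {j // j ≠ k} => M j)ᵀ = flattening k ψ := by
  rw [← vec_inj, ← kronecker_mulVec_vec, ← piKronecker_submatrix_piSplitAt, vec_flattening,
    submatrix_mulVec_equiv, Equiv.symm_symm, Function.comp_assoc, Equiv.symm_comp_self,
    Function.comp_id, hψ]

end flattening

theorem sum_norm_sq_pos {α E : Type*} [Fintype α] [NormedAddCommGroup E] {ψ : α → E}
    (hψ : ψ ≠ 0) : 0 < ∑ x, ‖ψ x‖ ^ 2 := by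
  obtain ⟨x, hx⟩ := Function.ne_iff.mp hψ
  exact Finset.sum_pos' (fun z _ => by positivity) ⟨x, Finset.mem_univ x, by positivity⟩

theorem IsIrreducibleRep.exists_eq_smul_one_of_commute {m : ℕ} {H : Type*} [Group H]
    {u : H →* unitaryGroup (Fin m) ℂ} (hu : IsIrreducibleRep u) {A : Matrix (Fin m) (Fin m) ℂ}
    (hA : ∀ h, Commute (u h : Matrix (Fin m) (Fin m) ℂ) A) :
    ∃ c : ℂ, A = c • 1 := by
  rcases isEmpty_or_nonempty (Fin m) with hm | hm
  · exact ⟨0, Subsingleton.elim _ _⟩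
  obtain ⟨c, hc⟩ := Module.End.exists_eigenvalue (toLin' A)
  refine ⟨c, ?_⟩
  have hinv : ∀ h, ∀ w ∈ Module.End.eigenspace (toLin' A) c,
      (u h : Matrix (Fin m) (Fin m) ℂ) *ᵥ w ∈ Module.End.eigenspace (toLin' A) c := by
    intro h w hw
    rw [Module.End.mem_eigenspace_iff, toLin'_apply] at hw ⊢
    rw [mulVec_mulVec, ← (hA h).eq, ← mulVec_mulVec, hw, mulVec_smul]
  rcases hu _ hinv with hbot | htop
  · exact absurd hbot hc
  · rw [Module.End.eigenspace_def, LinearMap.ker_eq_top, sub_eq_zero] at htop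
    apply toLin'.injective
    rw [htop, map_smul, toLin'_one]
    rfl

section rhoK

variable {n : ℕ} {d : Fin n → ℕ}

theorem rhoK_eq_flattening_mul_conjTranspose (ψ : (∀ i, Fin (d i)) → ℂ) (k : Fin n) :
    rhoK d ψ k = flattening k ψ * (flattening k ψ)ᴴ := by
  ext j l
  rw [rhoK, of_apply, ← (Equiv.piSplitAt k _).symm.sum_comp, Fintype.sum_prod_type,
    Finset.sum_eq_single j]
  · simp [mul_apply, flattening, update_piSplitAt_symm]
  · intro a _ ha
    simp [ha]
  · simp

theorem trace_rhoK (ψ : (∀ i, Fin (d i)) → ℂ) (k : Fin n) :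
    (rhoK d ψ k).trace = ((∑ x, ‖ψ x‖ ^ 2 : ℝ) : ℂ) := by
  simp only [trace, diag, rhoK, of_apply]
  rw [Finset.sum_comm]
  push_cast
  refine Finset.sum_congr rfl fun x _ => ?_
  simp [Complex.mul_conj, Complex.normSq_eq_norm_sq]

theorem rhoK_div_ofReal (ψ : (∀ i, Fin (d i)) → ℂ) (k : Fin n) (s : ℝ) :
    rhoK d (fun x => ψ x / s) k = ((s : ℂ) ^ 2)⁻¹ • rhoK d ψ k := by
  ext j l
  simp only [rhoK, of_apply, Matrix.smul_apply, smul_eq_mul, Finset.mul_sum]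
  refine Finset.sum_congr rfl fun x _ => ?_
  split_ifs
  · simp only [map_div₀, Complex.conj_ofReal]
    ring
  · simp

theorem normalized_div_sqrt {ψ : (∀ i, Fin (d i)) → ℂ} (hψ : ψ ≠ 0) :
    Normalized (fun x => ψ x / (Real.sqrt (∑ z, ‖ψ z‖ ^ 2) : ℂ)) := by
  simp only [Normalized, norm_div, Complex.norm_real, Real.norm_of_nonneg (Real.sqrt_nonneg _),
    div_pow, Real.sq_sqrt (sum_norm_sq_pos hψ).le, ← Finset.sum_div]
  exact div_self (sum_norm_sq_pos hψ).ne'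

theorem commute_rhoK_of_mulVec_eq {M : ∀ i, Matrix (Fin (d i)) (Fin (d i)) ℂ}
    (hM : ∀ i, M i ∈ unitaryGroup (Fin (d i)) ℂ) {ψ : (∀ i, Fin (d i)) → ℂ}
    (hψ : piKronecker M *ᵥ ψ = ψ) (k : Fin n) :
    Commute (M k) (rhoK d ψ k) := by
  rw [rhoK_eq_flattening_mul_conjTranspose]
  exact commute_mul_conjTranspose_of_mul_mul_transpose_eq (hM k)
    (piKronecker_mem_unitaryGroup fun j => hM j) (mul_flattening_mul_transpose k hψ)

end rhoK

theorem invariant_vector_is_lme_general (n : ℕ) (d : Fin n → ℕ)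
    (H : Type*) [Group H]
    (u : ∀ i : Fin n, H →* Matrix.unitaryGroup (Fin (d i)) ℂ)
    (hirr : ∀ i, IsIrreducibleRep (u i))
    (ψ : (∀ i, Fin (d i)) → ℂ) (hne : ψ ≠ 0)
    (hinv : ∀ h : H, ∀ x : ∀ i, Fin (d i),
      ∑ y : ∀ i, Fin (d i),
        (∏ i, (u i h : Matrix (Fin (d i)) (Fin (d i)) ℂ) (x i) (y i)) * ψ y = ψ x) :
    IsLME d (fun x => ψ x / (Real.sqrt (∑ z, ‖ψ z‖ ^ 2) : ℂ)) := by
  set S := ∑ z, ‖ψ z‖ ^ 2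
  have hS : 0 < S := sum_norm_sq_pos hne
  have hS' : (S : ℂ) ≠ 0 := by exact_mod_cast hS.ne'
  refine ⟨normalized_div_sqrt hne, fun k => ?_⟩
  obtain ⟨c, hc⟩ := (hirr k).exists_eq_smul_one_of_commute fun h =>
    commute_rhoK_of_mulVec_eq (fun i => (u i h).2) (funext (hinv h)) k
  have hcS : c * d k = S := by
    rw [← trace_rhoK, hc, trace_smul, trace_one, Fintype.card_fin, smul_eq_mul]
  have hdk : (d k : ℂ) ≠ 0 := fun hdk => hS' (by rw [← hcS, hdk, mul_zero])
  rw [rhoK_div_ofReal, ← Complex.ofReal_pow, Real.sq_sqrt hS.le, hc, smul_smul]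
  congr 1
  rw [eq_div_iff hdk, mul_assoc, hcS, inv_mul_cancel₀ hS']

/-- a nonzero invariant vector of a tensor product of irreducible
unitary representations, once normalized, is locally maximally entangled. -/
theorem invariant_vector_is_lme (n : ℕ) (d : Fin n → ℕ) (hd : ∀ i, 1 ≤ d i)
    (H : Type*) [Group H]
    (u : ∀ i : Fin n, H →* Matrix.unitaryGroup (Fin (d i)) ℂ)
    (hirr : ∀ i, IsIrreducibleRep (u i))
    (ψ : (∀ i, Fin (d i)) → ℂ) (hne : ψ ≠ 0)
    (hinv : ∀ h : H, ∀ x : ∀ i, Fin (d i),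
      ∑ y : ∀ i, Fin (d i),
        (∏ i, (u i h : Matrix (Fin (d i)) (Fin (d i)) ℂ) (x i) (y i)) * ψ y = ψ x) :
    IsLME d (fun x => ψ x / (Real.sqrt (∑ z, ‖ψ z‖ ^ 2) : ℂ)) :=
  invariant_vector_is_lme_general n d H u hirr ψ hne hinv
end
end

section
/- For any state ψ (not necessarily normalized) for dimensions d : Fin n → ℕ, the complex number M(ψ) = ∑_k ( trace (ρ_k(ψ) * ρ_k(ψ)) − (trace ρ_k(ψ))^2 / (d k) ) is real and nonnegative (its imaginary part is 0 and its real part is ≥ 0), and M(ψ) = 0 if and only if for every k the matrix ρ_k(ψ) equals ((trace ρ_k(ψ)) / (d k)) • 1, i.e. every reduced density matrix is a scalar multiple of the identity. -/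
open scoped ComplexConjugate Matrix

noncomputable section

lemma rhoK_herm {n : ℕ} (d : Fin n → ℕ) (ψ : (∀ i, Fin (d i)) → ℂ) (k : Fin n) :
    (rhoK d ψ k)ᴴ = rhoK d ψ k := by
  ext j l
  simp only [Matrix.conjTranspose_apply, rhoK, Matrix.of_apply, star_sum, apply_ite star,
    star_zero, star_mul']
  rw [show (∑ x : ∀ i, Fin (d i), if x k = l then
        star (ψ x) * star (conj (ψ (Function.update x k j))) else 0)
      = ∑ x ∈ Finset.univ.filter (fun x : ∀ i, Fin (d i) => x k = l),
          ψ (Function.update x k j) * conj (ψ x) by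
      rw [← Finset.sum_filter]; apply Finset.sum_congr rfl; intro x _;
      simp [mul_comm],
    show (∑ x : ∀ i, Fin (d i), if x k = j then ψ x * conj (ψ (Function.update x k l)) else 0)
      = ∑ x ∈ Finset.univ.filter (fun x : ∀ i, Fin (d i) => x k = j),
          ψ x * conj (ψ (Function.update x k l)) from (Finset.sum_filter _ _).symm]
  refine Finset.sum_nbij' (fun x => Function.update x k j) (fun y => Function.update y k l)
    ?_ ?_ ?_ ?_ ?_
  · intro x hx; simp
  · intro y hy; simp
  · intro x hx
    simp only [Finset.mem_filter] at hx
    rw [Function.update_idem, ← hx.2, Function.update_eq_self]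
  · intro y hy
    simp only [Finset.mem_filter] at hy
    rw [Function.update_idem, ← hy.2, Function.update_eq_self]
  · intro x hx
    simp only [Finset.mem_filter] at hx
    rw [Function.update_idem, ← hx.2, Function.update_eq_self]


lemma key {m : ℕ} (hm : (m : ℂ) ≠ 0) (A : Matrix (Fin m) (Fin m) ℂ) (hA : Aᴴ = A) :
    (A * A).trace - A.trace ^ 2 / m =
      ((∑ i, ∑ j, ‖(A - (A.trace / m) • 1) i j‖ ^ 2 : ℝ) : ℂ) := by
  have htr : starRingEnd ℂ A.trace = A.trace := by
    rw [show (starRingEnd ℂ A.trace) = Aᴴ.trace by simp [Matrix.trace_conjTranspose], hA]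
  set c : ℂ := A.trace / m with hc
  have hcc : starRingEnd ℂ c = c := by
    simp [hc, map_div₀, htr]
  set B := A - c • 1 with hB
  have hBH : Bᴴ = B := by
    simp [hB, Matrix.conjTranspose_smul, hA]
    ext i j
    simp [Matrix.one_apply]
    split <;> simp [hcc]
  have h1 : (B * B).trace = (A * A).trace - A.trace ^ 2 / m := by
    have : B * B = A * A - c • A - c • A + (c * c) • 1 := by
      rw [hB]
      rw [Matrix.sub_mul, Matrix.mul_sub, Matrix.mul_sub]
      simp [Matrix.smul_mul, Matrix.mul_smul, smul_smul]
      abel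
    rw [this]
    simp [Matrix.trace_sub, Matrix.trace_add, Matrix.trace_smul, Matrix.trace_one]
    rw [hc]
    field_simp
    ring
  rw [← h1]
  rw [Matrix.trace]
  simp only [Matrix.diag_apply, Matrix.mul_apply]
  rw [Complex.ofReal_sum]
  apply Finset.sum_congr rfl
  intro i _
  rw [Complex.ofReal_sum]
  apply Finset.sum_congr rfl
  intro j _
  have h2 : B j i = starRingEnd ℂ (B i j) := by
    have := congrFun (congrFun hBH j) i
    simp only [Matrix.conjTranspose_apply] at this
    rw [← this]; rfl
  rw [h2, Complex.mul_conj']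
  push_cast
  ring


lemma key2 {m : ℕ} (A : Matrix (Fin m) (Fin m) ℂ) (c : ℂ) :
    (∑ i, ∑ j, ‖(A - c • 1) i j‖ ^ 2) = 0 ↔ A = c • 1 := by
  constructor
  · intro h
    have h2 := (Finset.sum_eq_zero_iff_of_nonneg (fun i _ =>
      Finset.sum_nonneg fun j _ => sq_nonneg _)).1 h
    have h3 : ∀ i j : Fin m, (A - c • 1) i j = 0 := by
      intro i j
      have := (Finset.sum_eq_zero_iff_of_nonneg (fun j _ => sq_nonneg _)).1
        (h2 i (Finset.mem_univ i)) j (Finset.mem_univ j)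
      have := pow_eq_zero_iff (n := 2) (by norm_num) |>.1 this
      simpa [sub_eq_zero] using this
    have : A - c • 1 = 0 := Matrix.ext h3
    rwa [sub_eq_zero] at this
  · intro h
    rw [h]
    simp


/-- the square of the moment map is real, nonnegative, and
vanishes exactly when every reduced density matrix is a scalar multiple of the
identity. -/
theorem moment_map_square (n : ℕ) (d : Fin n → ℕ) (hd : ∀ i, 1 ≤ d i)
    (ψ : (∀ i, Fin (d i)) → ℂ) :
    (∑ k, ((rhoK d ψ k * rhoK d ψ k).trace -
        (rhoK d ψ k).trace ^ 2 / (d k : ℂ))).im = 0 ∧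
    0 ≤ (∑ k, ((rhoK d ψ k * rhoK d ψ k).trace -
        (rhoK d ψ k).trace ^ 2 / (d k : ℂ))).re ∧
    ((∑ k, ((rhoK d ψ k * rhoK d ψ k).trace -
        (rhoK d ψ k).trace ^ 2 / (d k : ℂ))) = 0 ↔
      ∀ k, rhoK d ψ k = ((rhoK d ψ k).trace / (d k : ℂ)) • 1) := by
  have hdk : ∀ k, ((d k : ℂ)) ≠ 0 := fun k =>
    Nat.cast_ne_zero.mpr (by have := hd k; omega)
  set r : Fin n → ℝ := fun k =>
    ∑ i, ∑ j, ‖(rhoK d ψ k - ((rhoK d ψ k).trace / (d k : ℂ)) • 1) i j‖ ^ 2 with hr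
  have hsum : (∑ k, ((rhoK d ψ k * rhoK d ψ k).trace -
      (rhoK d ψ k).trace ^ 2 / (d k : ℂ))) = ((∑ k, r k : ℝ) : ℂ) := by
    rw [Complex.ofReal_sum]
    exact Finset.sum_congr rfl fun k _ => key (hdk k) _ (rhoK_herm d ψ k)
  have hnn : ∀ k ∈ Finset.univ, (0 : ℝ) ≤ r k := fun k _ =>
    Finset.sum_nonneg fun i _ => Finset.sum_nonneg fun j _ => sq_nonneg _
  refine ⟨by rw [hsum]; simp, by rw [hsum]; simpa using Finset.sum_nonneg hnn, ?_⟩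
  rw [hsum]
  constructor
  · intro h
    have h0 : (∑ k, r k) = 0 := by exact_mod_cast h
    intro k
    exact (key2 _ _).1 ((Finset.sum_eq_zero_iff_of_nonneg hnn).1 h0 k (Finset.mem_univ k))
  · intro h
    have h0 : ∀ k, r k = 0 := fun k => (key2 _ _).2 (h k)
    simp [h0]
end
end

section
/- Let n ≥ 2, let d_1, …, d_{n−1} be positive integers with product P = ∏_{i<n} d_i, and let d_n be an integer with 1 ≤ d_n ≤ P − 1. Then R(d_1, …, d_{n−1}, d_n) = R(d_1, …, d_{n−1}, P − d_n). -/
open scoped ComplexConjugate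

noncomputable section

/-! Put the varying entry `a` at position `p` and let `Q` be the product of the other entries,
so `R = a Q - N`. Every gcd in `N` is the square of the gcd of the unsquared entries. A subset
containing `p` and some other index has gcd `gcd(a, H)` with `H ∣ Q`, and `gcd(a, H) =
gcd(Q - a, H)`; subsets avoiding `p` do not involve `a`. So under `a ↦ Q - a` only the term `a²`
of the singleton `{p}` changes, and `R = a (Q - a) - (N - a²)` is symmetric. -/

theorem Finset.gcd_pow {ι : Type*} [DecidableEq ι] (s : Finset ι) (f : ι → ℕ) {k : ℕ}
    (hk : k ≠ 0) : s.gcd (fun i => f i ^ k) = s.gcd f ^ k := by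
  induction s using Finset.induction with
  | empty => simp [hk]
  | insert _ _ _ ih =>
    rw [Finset.gcd_insert, Finset.gcd_insert, ih, gcd_eq_nat_gcd, gcd_eq_nat_gcd, Nat.pow_gcd_pow]

theorem Finset.gcd_eq_of_add_eq_of_dvd {ι : Type*} [DecidableEq ι] {f g : ι → ℕ} {i₀ : ι}
    {Q : ℕ} (hfg : ∀ i ≠ i₀, f i = g i) (hdvd : ∀ i ≠ i₀, f i ∣ Q) (hsum : f i₀ + g i₀ = Q)
    {S : Finset ι} (hS : S ≠ {i₀}) : S.gcd f = S.gcd g := by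
  have hgcd_off : ∀ T : Finset ι, i₀ ∉ T → T.gcd f = T.gcd g := fun T hT =>
    Finset.gcd_congr rfl fun i hi => hfg i (ne_of_mem_of_not_mem hi hT)
  by_cases hi₀ : i₀ ∈ S
  swap
  · exact hgcd_off S hi₀
  obtain ⟨j, hj⟩ : (S.erase i₀).Nonempty := by
    rw [Finset.nonempty_iff_ne_empty, Ne, Finset.erase_eq_empty_iff]
    exact not_or.2 ⟨Finset.ne_empty_of_mem hi₀, hS⟩
  have hH : (S.erase i₀).gcd f ∣ Q :=
    (Finset.gcd_dvd hj).trans (hdvd j (Finset.ne_of_mem_erase hj))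
  rw [← Finset.insert_erase hi₀, Finset.gcd_insert, Finset.gcd_insert,
    ← hgcd_off _ (Finset.notMem_erase i₀ S), gcd_eq_nat_gcd, gcd_eq_nat_gcd, Nat.gcd_comm,
    Nat.gcd_comm (g i₀), show g i₀ = Q - f i₀ by omega,
    Nat.gcd_sub_left_right_of_dvd _ (by omega) hH]

theorem Nfun_sub_apply_eq_of_gcd_eq {n : ℕ} {k k' : Fin n → ℕ} {i₀ : Fin n}
    (h : ∀ S : Finset (Fin n), S ≠ {i₀} → S.gcd k = S.gcd k') :
    Nfun k - k i₀ = Nfun k' - k' i₀ := by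
  set A := Finset.univ.powerset.filter (fun S : Finset (Fin n) => S.Nonempty)
  have hsplit : ∀ k : Fin n → ℕ, Nfun k - k i₀ =
      ∑ S ∈ A.erase {i₀}, (-1 : ℤ) ^ (S.card + 1) * ((S.gcd k : ℕ) : ℤ) := by
    intro k
    rw [Nfun, ← Finset.add_sum_erase A _ (a := {i₀}) (by simp [A])]
    simp
  rw [hsplit, hsplit]
  exact Finset.sum_congr rfl fun S hS => by rw [h S (Finset.ne_of_mem_erase hS)]

theorem Rfun_insertNth_eq_of_add_eq {n : ℕ} (p : Fin (n + 1)) (d : Fin n → ℕ) {a b : ℕ}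
    (hab : a + b = ∏ i, d i) :
    Rfun (p.insertNth a d : Fin (n + 1) → ℕ) = Rfun (p.insertNth b d : Fin (n + 1) → ℕ) := by
  set f : Fin (n + 1) → ℕ := p.insertNth a d
  set g : Fin (n + 1) → ℕ := p.insertNth b d
  have hoff : ∀ i ≠ p, f i = g i := fun i hi => by
    obtain ⟨j, rfl⟩ := Fin.exists_succAbove_eq hi
    simp [f, g]
  have hdvd : ∀ i ≠ p, f i ∣ ∏ i, d i := fun i hi => by
    obtain ⟨j, rfl⟩ := Fin.exists_succAbove_eq hi
    simpa [f] using Finset.dvd_prod_of_mem d (Finset.mem_univ j)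
  have hgcd : ∀ S : Finset (Fin (n + 1)), S ≠ {p} → S.gcd f = S.gcd g := fun S hS =>
    Finset.gcd_eq_of_add_eq_of_dvd hoff hdvd (by simpa [f, g]) hS
  have hN := Nfun_sub_apply_eq_of_gcd_eq (k := fun i => f i ^ 2) (k' := fun i => g i ^ 2)
    fun S hS => by rw [S.gcd_pow f two_ne_zero, S.gcd_pow g two_ne_zero, hgcd S hS]
  have hab' : (a + b : ℤ) = ∏ i, (d i : ℤ) := by exact_mod_cast hab
  simp only [f, g, Fin.insertNth_apply_same] at hN
  simp only [Rfun, f, g, ← Nat.cast_prod, Fin.prod_insertNth]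
  push_cast at hN ⊢
  linear_combination -hN + ((b : ℤ) - a) * hab'

theorem R_invariant_reflection_general (m : ℕ) (d : Fin m → ℕ)
    (dn : ℕ) (hdn2 : dn ≤ (∏ i, d i) - 1) :
    Rfun (Fin.snoc d dn) = Rfun (Fin.snoc d ((∏ i, d i) - dn)) := by
  rw [← Fin.insertNth_last', ← Fin.insertNth_last']
  exact Rfun_insertNth_eq_of_add_eq _ d (by omega)

/-- R is invariant under replacing the last dimension d_n by
P - d_n, where P is the product of the other dimensions. -/
theorem R_invariant_reflection (m : ℕ) (hm : 1 ≤ m) (d : Fin m → ℕ)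
    (hd : ∀ i, 1 ≤ d i) (dn : ℕ) (hdn1 : 1 ≤ dn) (hdn2 : dn ≤ (∏ i, d i) - 1) :
    Rfun (Fin.snoc d dn) = Rfun (Fin.snoc d ((∏ i, d i) - dn)) :=
  R_invariant_reflection_general m d dn hdn2
end
end

section
/- Let n ≥ 2 and let 1 ≤ d_1 ≤ d_2 ≤ … ≤ d_n be positive integers, with P = ∏_{i<n} d_i. Then: (i) if d_n > P then R(d_1, …, d_n) < 0; (ii) if d_n = P then R(d_1, …, d_n) = 0; (iii) if 2·d_n ≤ P then R(d_1, …, d_n) > 0. -/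
open scoped ComplexConjugate

noncomputable section

-- helper: sum over biUnion ≤ sum of sums (ℕ)
lemma sum_biUnion_le' {ι α : Type*} [DecidableEq α] (s : Finset ι) (t : ι → Finset α)
    (f : α → ℕ) : ∑ x ∈ s.biUnion t, f x ≤ ∑ i ∈ s, ∑ x ∈ t i, f x := by
  classical
  induction s using Finset.induction_on with
  | empty => simp
  | @insert a s hx ih =>
    rw [Finset.biUnion_insert, Finset.sum_insert hx]
    calc ∑ x ∈ t a ∪ s.biUnion t, f x ≤ ∑ x ∈ t a, f x + ∑ x ∈ s.biUnion t, f x := by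
          have := Finset.sum_union_inter (s₁ := t a) (s₂ := s.biUnion t) (f := f)
          omega
      _ ≤ _ := by exact Nat.add_le_add_left ih _

lemma alt_sum_nonempty {α : Type*} [DecidableEq α] (A : Finset α) (hA : A.Nonempty) :
    ∑ S ∈ A.powerset.filter (fun S => S.Nonempty), (-1 : ℤ) ^ (S.card + 1) = 1 := by
  have h0 : ∑ S ∈ A.powerset, (-1 : ℤ) ^ S.card = 0 :=
    Finset.sum_powerset_neg_one_pow_card_of_nonempty hA
  have hsplit := Finset.sum_filter_add_sum_filter_not A.powerset
    (fun S => S.Nonempty) (fun S => (-1 : ℤ) ^ S.card)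
  have hempty : A.powerset.filter (fun S => ¬ S.Nonempty) = {∅} := by
    ext S
    simp [Finset.mem_filter, Finset.mem_powerset, Finset.not_nonempty_iff_eq_empty]
    rintro rfl; exact Finset.empty_subset _
  rw [hempty] at hsplit
  simp at hsplit
  have h1 : ∑ S ∈ A.powerset.filter (fun S => S.Nonempty), (-1 : ℤ) ^ S.card = -1 := by
    linarith
  calc ∑ S ∈ A.powerset.filter (fun S => S.Nonempty), (-1 : ℤ) ^ (S.card + 1)
      = ∑ S ∈ A.powerset.filter (fun S => S.Nonempty), ((-1 : ℤ) ^ S.card) * (-1) := by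
        apply Finset.sum_congr rfl; intro S _; ring
    _ = (∑ S ∈ A.powerset.filter (fun S => S.Nonempty), (-1 : ℤ) ^ S.card) * (-1) := by
        rw [Finset.sum_mul]
    _ = 1 := by rw [h1]; ring

end

noncomputable section NId
open Finset

lemma Nfun_eq {n : ℕ} (k : Fin n → ℕ) (hk : ∀ i, k i ≠ 0) :
    Nfun k = ((∑ e ∈ Finset.univ.biUnion (fun i : Fin n => (k i).divisors),
      Nat.totient e : ℕ) : ℤ) := by
  classical
  set D := Finset.univ.biUnion (fun i : Fin n => (k i).divisors) with hD
  set filt := Finset.univ.powerset.filter (fun S : Finset (Fin n) => S.Nonempty) with hfilt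
  have key : ∀ S : Finset (Fin n), S.Nonempty →
      ((S.gcd k : ℕ) : ℤ) = ∑ e ∈ D, if S ⊆ Finset.univ.filter (fun i => e ∣ k i)
        then (Nat.totient e : ℤ) else 0 := by
    intro S hS
    have hg0 : S.gcd k ≠ 0 := by
      rw [Ne, Finset.gcd_eq_zero_iff]
      obtain ⟨i, hi⟩ := hS
      exact fun h => hk i (h i hi)
    have hdiv : (S.gcd k).divisors
        = D.filter (fun e => S ⊆ Finset.univ.filter (fun i => e ∣ k i)) := by
      ext e
      simp only [Nat.mem_divisors, Finset.mem_filter, hD, Finset.mem_biUnion, Finset.mem_univ,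
        true_and, Finset.subset_iff, Finset.mem_filter, Finset.mem_univ, true_and]
      constructor
      · rintro ⟨hdvd, -⟩
        obtain ⟨i, hi⟩ := hS
        refine ⟨⟨i, hdvd.trans (Finset.gcd_dvd hi), hk i⟩, ?_⟩
        intro j hj
        exact hdvd.trans (Finset.gcd_dvd hj)
      · rintro ⟨-, hall⟩
        exact ⟨Finset.dvd_gcd hall, hg0⟩
    rw [← Finset.sum_filter, ← hdiv]
    rw [show ∑ e ∈ (S.gcd k).divisors, (Nat.totient e : ℤ)
        = ((∑ e ∈ (S.gcd k).divisors, Nat.totient e : ℕ) : ℤ) by push_cast; ring]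
    rw [show ∑ e ∈ (S.gcd k).divisors, Nat.totient e = S.gcd k from Nat.sum_totient _]
  calc Nfun k
      = ∑ S ∈ filt, ∑ e ∈ D, (if S ⊆ Finset.univ.filter (fun i => e ∣ k i)
          then (-1 : ℤ) ^ (S.card + 1) * (Nat.totient e : ℤ) else 0) := by
        unfold Nfun
        apply Finset.sum_congr rfl
        intro S hS
        have hS' : S.Nonempty := (Finset.mem_filter.1 hS).2
        rw [key S hS', Finset.mul_sum]
        apply Finset.sum_congr rfl
        intro e _
        rw [mul_ite, mul_zero]
    _ = ∑ e ∈ D, ∑ S ∈ filt, (if S ⊆ Finset.univ.filter (fun i => e ∣ k i)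
          then (-1 : ℤ) ^ (S.card + 1) * (Nat.totient e : ℤ) else 0) := Finset.sum_comm
    _ = ∑ e ∈ D, (Nat.totient e : ℤ) := by
        apply Finset.sum_congr rfl
        intro e he
        rw [← Finset.sum_filter]
        have hfe : filt.filter (fun S => S ⊆ Finset.univ.filter (fun i => e ∣ k i))
            = (Finset.univ.filter (fun i => e ∣ k i)).powerset.filter
                (fun S => S.Nonempty) := by
          ext S
          simp only [hfilt, Finset.mem_filter, Finset.mem_powerset]
          constructor
          · rintro ⟨⟨-, hne⟩, hsub⟩; exact ⟨hsub, hne⟩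
          · rintro ⟨hsub, hne⟩; exact ⟨⟨Finset.subset_univ _, hne⟩, hsub⟩
        rw [hfe]
        have hAne : (Finset.univ.filter (fun i => e ∣ k i)).Nonempty := by
          rw [hD, Finset.mem_biUnion] at he
          obtain ⟨i, -, hi⟩ := he
          exact ⟨i, Finset.mem_filter.2 ⟨Finset.mem_univ _, (Nat.mem_divisors.1 hi).1⟩⟩
        rw [← Finset.sum_mul, alt_sum_nonempty _ hAne, one_mul]
    _ = _ := by push_cast; ring
end NId

section Arith
open Finset

lemma lemK {ι : Type*} (B : Finset ι) (u : ι → ℕ) (hu : ∀ i ∈ B, 1 ≤ u i) :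
    ∑ i ∈ B, u i + 1 ≤ ∏ i ∈ B, (1 + u i) := by
  classical
  induction B using Finset.induction_on with
  | empty => simp
  | @insert a s ha ih =>
    rw [Finset.sum_insert ha, Finset.prod_insert ha]
    have h1 : ∑ i ∈ s, u i + 1 ≤ ∏ i ∈ s, (1 + u i) :=
      ih (fun i hi => hu i (Finset.mem_insert_of_mem hi))
    have h2 : 1 ≤ u a := hu a (Finset.mem_insert_self a s)
    have h3 : 1 ≤ ∏ i ∈ s, (1 + u i) := Finset.one_le_prod' (fun i _ => by omega)
    nlinarith

lemma lemK2 {ι : Type*} (B : Finset ι) (u : ι → ℕ) (hu : ∀ i ∈ B, 1 ≤ u i)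
    (hc : 2 ≤ B.card) : ∑ i ∈ B, u i + 2 ≤ ∏ i ∈ B, (1 + u i) := by
  classical
  obtain ⟨a, ha⟩ : B.Nonempty := Finset.card_pos.1 (by omega)
  have hne : (B.erase a).Nonempty := by
    rw [← Finset.card_pos, Finset.card_erase_of_mem ha]; omega
  obtain ⟨b, hb⟩ := hne
  have hsum : ∑ i ∈ B, u i = u a + ∑ i ∈ B.erase a, u i := (Finset.add_sum_erase _ _ ha).symm
  have hprod : ∏ i ∈ B, (1 + u i) = (1 + u a) * ∏ i ∈ B.erase a, (1 + u i) :=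
    (Finset.mul_prod_erase _ _ ha).symm
  have h1 : ∑ i ∈ B.erase a, u i + 1 ≤ ∏ i ∈ B.erase a, (1 + u i) :=
    lemK _ _ (fun i hi => hu i (Finset.mem_of_mem_erase hi))
  have h2 : 1 ≤ u a := hu a ha
  have h3 : 1 ≤ ∑ i ∈ B.erase a, u i :=
    le_trans (hu b (Finset.mem_of_mem_erase hb)) (Finset.single_le_sum (fun i _ => Nat.zero_le _) hb)
  rw [hsum, hprod]
  nlinarith

lemma lemM {ι : Type*} (B : Finset ι) (u : ι → ℕ) (hu : ∀ i ∈ B, 1 ≤ u i)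
    (hc : 2 ≤ B.card) (hbig : ∀ i ∈ B, u i + 2 ≤ ∑ j ∈ B, u j) :
    2 * ∑ i ∈ B, u i + 1 ≤ ∏ i ∈ B, (1 + u i) := by
  classical
  by_cases hone : ∃ a ∈ B, u a = 1
  · obtain ⟨a, ha, hua⟩ := hone
    have hsum : ∑ i ∈ B, u i = u a + ∑ i ∈ B.erase a, u i := (Finset.add_sum_erase _ _ ha).symm
    have hprod : ∏ i ∈ B, (1 + u i) = (1 + u a) * ∏ i ∈ B.erase a, (1 + u i) :=
      (Finset.mul_prod_erase _ _ ha).symm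
    have hcard3 : 3 ≤ B.card := by
      by_contra hlt
      have hc2 : B.card = 2 := by omega
      have : (B.erase a).card = 1 := by rw [Finset.card_erase_of_mem ha]; omega
      obtain ⟨b, hb⟩ := Finset.card_eq_one.1 this
      have hbB : b ∈ B := Finset.mem_of_mem_erase (hb ▸ Finset.mem_singleton_self b)
      have hsb : ∑ i ∈ B.erase a, u i = u b := by rw [hb, Finset.sum_singleton]
      have := hbig b hbB
      rw [hsum, hsb, hua] at this
      omega
    have hce : 2 ≤ (B.erase a).card := by rw [Finset.card_erase_of_mem ha]; omega
    have h1 : ∑ i ∈ B.erase a, u i + 2 ≤ ∏ i ∈ B.erase a, (1 + u i) :=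
      lemK2 _ _ (fun i hi => hu i (Finset.mem_of_mem_erase hi)) hce
    rw [hsum, hprod, hua]
    omega
  · push_neg at hone
    obtain ⟨a, ha⟩ : B.Nonempty := Finset.card_pos.1 (by omega)
    have hua : 2 ≤ u a := by have := hu a ha; have := hone a ha; omega
    have hsum : ∑ i ∈ B, u i = u a + ∑ i ∈ B.erase a, u i := (Finset.add_sum_erase _ _ ha).symm
    have hprod : ∏ i ∈ B, (1 + u i) = (1 + u a) * ∏ i ∈ B.erase a, (1 + u i) :=
      (Finset.mul_prod_erase _ _ ha).symm
    have h1 : ∑ i ∈ B.erase a, u i + 1 ≤ ∏ i ∈ B.erase a, (1 + u i) :=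
      lemK _ _ (fun i hi => hu i (Finset.mem_of_mem_erase hi))
    have h2 : 2 ≤ ∑ i ∈ B.erase a, u i := by
      have := hbig a ha; rw [hsum] at this; omega
    rw [hsum, hprod]
    nlinarith

lemma gcd_sq (a b : ℕ) (ha : a ≠ 0) : Nat.gcd (a ^ 2) (b ^ 2) = Nat.gcd a b ^ 2 := by
  have hg : 0 < Nat.gcd a b := Nat.gcd_pos_of_pos_left b (Nat.pos_of_ne_zero ha)
  set g := Nat.gcd a b with hgdef
  have ha' : g * (a / g) = a := Nat.mul_div_cancel' (Nat.gcd_dvd_left a b)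
  have hb' : g * (b / g) = b := Nat.mul_div_cancel' (Nat.gcd_dvd_right a b)
  have hcop : Nat.Coprime (a / g) (b / g) := Nat.coprime_div_gcd_div_gcd hg
  have hcop2 : Nat.Coprime ((a / g) ^ 2) ((b / g) ^ 2) := hcop.pow 2 2
  calc Nat.gcd (a ^ 2) (b ^ 2) = Nat.gcd (g ^ 2 * (a / g) ^ 2) (g ^ 2 * (b / g) ^ 2) := by
        rw [← mul_pow, ← mul_pow, ha', hb']
    _ = g ^ 2 * Nat.gcd ((a / g) ^ 2) ((b / g) ^ 2) := Nat.gcd_mul_left _ _ _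
    _ = g ^ 2 := by rw [hcop2, mul_one]

lemma sdiff_divisors_sum (a b : ℕ) (ha : a ≠ 0) (hb : b ≠ 0) :
    ∑ e ∈ a.divisors \ b.divisors, Nat.totient e + Nat.gcd a b = a := by
  have hg : Nat.gcd a b ≠ 0 := Nat.gcd_ne_zero_left ha
  have hsub : (Nat.gcd a b).divisors ⊆ a.divisors :=
    Nat.divisors_subset_of_dvd ha (Nat.gcd_dvd_left a b)
  have hEq : a.divisors \ b.divisors = a.divisors \ (Nat.gcd a b).divisors := by
    ext e
    simp only [Finset.mem_sdiff, Nat.mem_divisors]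
    have hdg : ∀ e : ℕ, e ∣ Nat.gcd a b ↔ e ∣ a ∧ e ∣ b := fun e =>
      ⟨fun h => ⟨h.trans (Nat.gcd_dvd_left a b), h.trans (Nat.gcd_dvd_right a b)⟩,
       fun ⟨h1, h2⟩ => Nat.dvd_gcd h1 h2⟩
    rw [hdg e]
    tauto
  rw [hEq]
  have := Finset.sum_sdiff (f := Nat.totient) hsub
  rw [Nat.sum_totient, Nat.sum_totient] at this
  exact this

end Arith

lemma ineqC {m : ℕ} (dn P : ℕ) (t : Fin m → ℕ)
    (hdn : 1 ≤ dn) (h2 : 2 * dn ≤ P)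
    (ht : ∀ j, t j ≠ 0 → t j + 2 ≤ dn)
    (hQ : ∏ j ∈ Finset.univ.filter (fun j => t j ≠ 0), (1 + t j) ≤ P) :
    dn + ∑ j, t j < P := by
  classical
  set s := ∑ j, t j with hs_def
  by_cases hs : s + 1 ≤ dn
  · omega
  · have hsdn : dn ≤ s := by omega
    set B := Finset.univ.filter (fun j => t j ≠ 0) with hB_def
    have hsB : ∑ j ∈ B, t j = s := Finset.sum_filter_ne_zero _
    have hmem : ∀ j ∈ B, t j ≠ 0 := fun j hj => (Finset.mem_filter.1 hj).2
    have hcard : 2 ≤ B.card := by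
      by_contra hlt
      interval_cases h : B.card
      · have : B = ∅ := Finset.card_eq_zero.1 h
        rw [this, Finset.sum_empty] at hsB
        omega
      · obtain ⟨b, hb⟩ := Finset.card_eq_one.1 h
        have hbB : b ∈ B := hb ▸ Finset.mem_singleton_self b
        have : ∑ j ∈ B, t j = t b := by rw [hb, Finset.sum_singleton]
        have := ht b (hmem b hbB)
        omega
    have hM := lemM B t (fun i hi => Nat.one_le_iff_ne_zero.2 (hmem i hi)) hcard
      (fun i hi => by rw [hsB]; have := ht i (hmem i hi); omega)
    rw [hsB] at hM
    omega

/-- the sign of R in the three terminal cases of the recursion. -/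
theorem R_sign_cases (m : ℕ) (hm : 1 ≤ m) (d : Fin (m + 1) → ℕ)
    (hd : ∀ i, 1 ≤ d i) (hmono : Monotone d) :
    (((∏ i : Fin m, d (Fin.castSucc i)) < d (Fin.last m)) → Rfun d < 0) ∧
    ((d (Fin.last m) = ∏ i : Fin m, d (Fin.castSucc i)) → Rfun d = 0) ∧
    ((2 * d (Fin.last m) ≤ ∏ i : Fin m, d (Fin.castSucc i)) → 0 < Rfun d) := by
  classical
  set dn := d (Fin.last m) with hdn_def
  set P := ∏ i : Fin m, d (Fin.castSucc i) with hP_def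
  have hdn1 : 1 ≤ dn := hd _
  have hP1 : 1 ≤ P := Finset.one_le_prod' (fun i _ => hd _)
  have hk : ∀ i : Fin (m + 1), d i ^ 2 ≠ 0 := fun i => by
    have := hd i; positivity
  have hdn2 : dn ^ 2 ≠ 0 := by positivity
  set D := Finset.univ.biUnion (fun i : Fin (m + 1) => (d i ^ 2).divisors) with hD_def
  have hNf : Nfun (fun i => d i ^ 2) = ((∑ e ∈ D, Nat.totient e : ℕ) : ℤ) := Nfun_eq _ hk
  set N := ∑ e ∈ D, Nat.totient e with hN_def
  have hprod : (∏ i, (d i : ℤ)) = (P : ℤ) * (dn : ℤ) := by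
    rw [Fin.prod_univ_castSucc, hP_def]
    push_cast
    ring
  have hRfun : Rfun d = (P : ℤ) * (dn : ℤ) - (N : ℤ) := by
    unfold Rfun
    rw [hprod, hNf]
  have hsubdn : (dn ^ 2).divisors ⊆ D :=
    Finset.subset_biUnion_of_mem (fun i : Fin (m + 1) => (d i ^ 2).divisors)
      (Finset.mem_univ (Fin.last m))
  have hlow : dn ^ 2 ≤ N := by
    calc dn ^ 2 = ∑ e ∈ (dn ^ 2).divisors, Nat.totient e := (Nat.sum_totient _).symm
      _ ≤ N := Finset.sum_le_sum_of_subset hsubdn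
  have hdle : ∀ j : Fin m, d (Fin.castSucc j) ≤ dn := fun j => hmono (Fin.le_last _)
  refine ⟨?_, ?_, ?_⟩
  · -- case (i) : P < dn
    intro h
    rw [hRfun]
    have h1 : (P : ℤ) < (dn : ℤ) := by exact_mod_cast h
    have h2 : ((dn : ℤ)) * dn ≤ (N : ℤ) := by
      have : ((dn ^ 2 : ℕ) : ℤ) ≤ (N : ℤ) := by exact_mod_cast hlow
      push_cast at this
      nlinarith
    have hdnpos : (0 : ℤ) < (dn : ℤ) := by exact_mod_cast hdn1
    nlinarith
  · -- case (ii) : dn = P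
    intro h
    have hdvd : ∀ i, d i ∣ dn := by
      intro i
      induction i using Fin.lastCases with
      | last => exact dvd_rfl
      | cast j =>
        rw [h, hP_def]
        exact Finset.dvd_prod_of_mem _ (Finset.mem_univ j)
    have hDeq : D = (dn ^ 2).divisors := by
      apply Finset.Subset.antisymm
      · apply Finset.biUnion_subset.2
        intro i _
        exact Nat.divisors_subset_of_dvd hdn2 (pow_dvd_pow_of_dvd (hdvd i) 2)
      · exact hsubdn
    have hNeq : N = dn ^ 2 := by rw [hN_def, hDeq, Nat.sum_totient]
    rw [hRfun, hNeq, ← h]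
    push_cast
    ring
  · -- case (iii) : 2 * dn ≤ P
    intro h
    set g : Fin m → ℕ := fun j => Nat.gcd (d (Fin.castSucc j)) dn with hg_def
    set t : Fin m → ℕ := fun j => d (Fin.castSucc j) - g j with ht_def
    have hgle : ∀ j, g j ≤ d (Fin.castSucc j) := fun j =>
      Nat.le_of_dvd (hd _) (Nat.gcd_dvd_left _ _)
    have hg1 : ∀ j, 1 ≤ g j := fun j =>
      Nat.pos_of_ne_zero (Nat.gcd_ne_zero_left (by have := hd (Fin.castSucc j); omega))
    have hgt : ∀ j, g j + t j = d (Fin.castSucc j) := fun j => by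
      have := hgle j
      show g j + (d (Fin.castSucc j) - g j) = d (Fin.castSucc j)
      omega
    have hlt : ∀ j, t j ≠ 0 → d (Fin.castSucc j) < dn := by
      intro j htj
      rcases lt_or_eq_of_le (hdle j) with h' | h'
      · exact h'
      · exfalso
        apply htj
        have : g j = dn := by
          rw [show g j = Nat.gcd (d (Fin.castSucc j)) dn from rfl, h', Nat.gcd_self]
        have := hgt j
        omega
    set F : Fin m → ℕ := fun j =>
      ∑ e ∈ (d (Fin.castSucc j) ^ 2).divisors \ (dn ^ 2).divisors, Nat.totient e with hF_def
    set U := Finset.univ.biUnion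
      (fun j : Fin m => (d (Fin.castSucc j) ^ 2).divisors \ (dn ^ 2).divisors) with hU_def
    have hDsub : D ⊆ (dn ^ 2).divisors ∪ U := by
      apply Finset.biUnion_subset.2
      intro i _
      induction i using Fin.lastCases with
      | last => exact fun e he => Finset.mem_union_left _ he
      | cast j =>
        intro e he
        by_cases hce : e ∈ (dn ^ 2).divisors
        · exact Finset.mem_union_left _ hce
        · exact Finset.mem_union_right _
            (Finset.mem_biUnion.2 ⟨j, Finset.mem_univ _, Finset.mem_sdiff.2 ⟨he, hce⟩⟩)
    have hstep1 : N ≤ dn ^ 2 + ∑ j : Fin m, F j := by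
      calc N ≤ ∑ e ∈ (dn ^ 2).divisors ∪ U, Nat.totient e :=
            Finset.sum_le_sum_of_subset hDsub
        _ ≤ ∑ e ∈ (dn ^ 2).divisors, Nat.totient e + ∑ e ∈ U, Nat.totient e := by
            have := Finset.sum_union_inter (s₁ := (dn ^ 2).divisors) (s₂ := U)
              (f := fun e => Nat.totient e)
            omega
        _ ≤ dn ^ 2 + ∑ j : Fin m, F j := by
            apply Nat.add_le_add
            · rw [Nat.sum_totient]
            · exact sum_biUnion_le' _ _ _
    have hstep3 : ∀ j, F j ≤ t j * dn := by
      intro j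
      have hdj : d (Fin.castSucc j) ≠ 0 := by have := hd (Fin.castSucc j); omega
      have h2 := sdiff_divisors_sum (d (Fin.castSucc j) ^ 2) (dn ^ 2) (hk _) hdn2
      rw [gcd_sq _ _ hdj] at h2
      have h2' : F j + g j ^ 2 = d (Fin.castSucc j) ^ 2 := h2
      by_cases ht0 : t j = 0
      · have hgj : g j = d (Fin.castSucc j) := by have := hgt j; omega
        rw [hgj] at h2'
        omega
      · have hdlt : d (Fin.castSucc j) < dn := hlt j ht0
        have hgdvd1 : g j ∣ d (Fin.castSucc j) := Nat.gcd_dvd_left _ _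
        have hgdvd2 : g j ∣ dn := Nat.gcd_dvd_right _ _
        have hgdvd3 : g j ∣ dn - d (Fin.castSucc j) := Nat.dvd_sub hgdvd2 hgdvd1
        have hgle2 : g j ≤ dn - d (Fin.castSucc j) :=
          Nat.le_of_dvd (by omega) hgdvd3
        have hsum_le : d (Fin.castSucc j) + g j ≤ dn := by omega
        have hdt : d (Fin.castSucc j) = g j + t j := (hgt j).symm
        rw [hdt] at h2'
        have expand : (g j + t j) ^ 2 = g j ^ 2 + t j * (g j + t j + g j) := by ring
        rw [expand] at h2'
        have hFj : F j = t j * (g j + t j + g j) := by omega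
        rw [hFj]
        exact Nat.mul_le_mul_left _ (by omega)
    have hN' : N ≤ (dn + ∑ j, t j) * dn := by
      calc N ≤ dn ^ 2 + ∑ j : Fin m, F j := hstep1
        _ ≤ dn ^ 2 + ∑ j : Fin m, t j * dn :=
            Nat.add_le_add_left (Finset.sum_le_sum fun j _ => hstep3 j) _
        _ = (dn + ∑ j, t j) * dn := by
            rw [← Finset.sum_mul]
            ring
    have htfact : ∀ j, t j ≠ 0 → t j + 2 ≤ dn := by
      intro j htj
      have := hlt j htj
      have := hg1 j
      have := hgt j
      omega
    have hC : dn + ∑ j, t j < P := by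
      apply ineqC dn P t hdn1 h htfact
      calc ∏ j ∈ Finset.univ.filter (fun j => t j ≠ 0), (1 + t j)
            ≤ ∏ j ∈ Finset.univ.filter (fun j => t j ≠ 0), d (Fin.castSucc j) := by
              apply Finset.prod_le_prod'
              intro j hj
              have := hg1 j
              have := hgt j
              omega
          _ ≤ P := by
              rw [hP_def]
              exact Finset.prod_le_prod_of_subset_of_one_le' (Finset.filter_subset _ _)
                (fun j _ _ => hd _)
    have hfin : N < P * dn := by
      calc N ≤ (dn + ∑ j, t j) * dn := hN'
        _ < P * dn := (Nat.mul_lt_mul_right (by omega : 0 < dn)).2 hC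
    rw [hRfun]
    have : (N : ℤ) < (P : ℤ) * (dn : ℤ) := by exact_mod_cast hfin
    linarith
end

section
/- Suppose n ≥ 3 and 2 ≤ d_1 ≤ d_2 ≤ … ≤ d_n are integers with 2·d_n ≤ ∏_{i<n} d_i and Δ(d_1, …, d_n) > 0. Then exactly one of the following holds: (d_1, …, d_n) = (3,3,3) (in which case Δ = 2), (d_1, …, d_n) = (2,2,2,2) (in which case Δ = 3), or Δ(d_1, …, d_n) > 3. -/
/-!
Δ is concave in the largest dimension `d_n`, and `2 d_n ≤ ∏_{i<n} d_i` keeps `d_n` in the range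
where lowering it to `d_{n-1}` does not increase Δ. Once the two largest dimensions both equal
`a`, bounding every other `d_i` by `a` gives `Δ ≥ (∏_{i ≤ n-2} d_i - n) a² + n - 1`, which exceeds
`3` as soon as `n ≥ 5`. For `n = 3, 4` the same concavity step leaves finitely many small
tuples, checked by hand.
-/

open scoped ComplexConjugate

noncomputable section

theorem mul_sub_sq_le_mul_sub_sq {Q a D : ℤ} (haD : a ≤ D) (hD : 2 * D ≤ Q) :
    Q * a - a ^ 2 ≤ Q * D - D ^ 2 := by
  nlinarith [mul_nonneg (sub_nonneg.2 haD) (by linarith : (0 : ℤ) ≤ Q - D - a)]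

theorem Dfun_castSucc_last {m : ℕ} (d : Fin (m + 1) → ℕ) :
    Dfun d = (∏ i : Fin m, (d i.castSucc : ℤ)) * d (Fin.last m) - (d (Fin.last m) : ℤ) ^ 2
      - ∑ i : Fin m, ((d i.castSucc : ℤ) ^ 2 - 1) := by
  rw [Dfun, Fin.prod_univ_castSucc, Fin.sum_univ_castSucc]
  ring

theorem Dfun_fin_three (d : Fin 3 → ℕ) :
    Dfun d = d 0 * d 1 * d 2 + 2 - (d 0 : ℤ) ^ 2 - (d 1 : ℤ) ^ 2 - (d 2 : ℤ) ^ 2 := by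
  simp only [Dfun, Fin.prod_univ_three, Fin.sum_univ_three]
  ring

theorem Dfun_fin_four (d : Fin 4 → ℕ) :
    Dfun d = d 0 * d 1 * d 2 * d 3 + 3
      - (d 0 : ℤ) ^ 2 - (d 1 : ℤ) ^ 2 - (d 2 : ℤ) ^ 2 - (d 3 : ℤ) ^ 2 := by
  simp only [Dfun, Fin.prod_univ_four, Fin.sum_univ_four]
  ring

theorem le_Dfun {m : ℕ} (d : Fin (m + 2) → ℕ) (hmono : Monotone d)
    (hbound : 2 * d (Fin.last (m + 1)) ≤ ∏ i : Fin (m + 1), d i.castSucc) :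
    ((∏ i : Fin m, (d i.castSucc.castSucc : ℤ)) - m - 2) * (d (Fin.last m).castSucc : ℤ) ^ 2
      + m + 1 ≤ Dfun d := by
  set a : ℤ := (d (Fin.last m).castSucc : ℤ)
  set R : ℤ := ∏ i : Fin m, (d i.castSucc.castSucc : ℤ)
  have hQ : ∏ i : Fin (m + 1), (d i.castSucc : ℤ) = R * a := Fin.prod_univ_castSucc _
  have hS : ∑ i : Fin (m + 1), ((d i.castSucc : ℤ) ^ 2 - 1) ≤ (m + 1) * (a ^ 2 - 1) := by
    calc ∑ i : Fin (m + 1), ((d i.castSucc : ℤ) ^ 2 - 1)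
        ≤ ∑ _i : Fin (m + 1), (a ^ 2 - 1) := by
          gcongr with i
          exact Nat.cast_le.2 (hmono (Fin.castSucc_le_castSucc_iff.2 (Fin.le_last i)))
      _ = (m + 1) * (a ^ 2 - 1) := by
          rw [Finset.sum_const, Finset.card_univ, Fintype.card_fin, nsmul_eq_mul]
          push_cast
          ring
  have hconc :
      R * a * a - a ^ 2 ≤ R * a * d (Fin.last (m + 1)) - (d (Fin.last (m + 1)) : ℤ) ^ 2 :=
    mul_sub_sq_le_mul_sub_sq (Nat.cast_le.2 (hmono (Fin.castSucc_lt_last _).le))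
      (by rw [← hQ]; exact_mod_cast hbound)
  rw [Dfun_castSucc_last, hQ]
  linarith

theorem three_lt_Dfun {m : ℕ} (hm : 3 ≤ m) (d : Fin (m + 2) → ℕ) (hd : ∀ i, 2 ≤ d i)
    (hmono : Monotone d)
    (hbound : 2 * d (Fin.last (m + 1)) ≤ ∏ i : Fin (m + 1), d i.castSucc) :
    3 < Dfun d := by
  have hR : (m : ℤ) + 2 ≤ ∏ i : Fin m, (d i.castSucc.castSucc : ℤ) := by
    have hpow : m + 2 ≤ 2 ^ m := by
      obtain ⟨k, rfl⟩ : ∃ k, m = k + 1 := ⟨m - 1, by omega⟩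
      have := Nat.lt_two_pow_self (n := k)
      rw [pow_succ]
      omega
    calc (m : ℤ) + 2 ≤ ∏ _i : Fin m, (2 : ℤ) := by simpa using (by exact_mod_cast hpow)
      _ ≤ _ := Finset.prod_le_prod (fun _ _ => by norm_num) fun i _ => by exact_mod_cast hd _
  have := le_Dfun d hmono hbound
  nlinarith [mul_nonneg (sub_nonneg.2 hR) (sq_nonneg (d (Fin.last m).castSucc : ℤ))]

theorem gap_three {x y z : ℤ} (hx : 2 ≤ x) (hxy : x ≤ y) (hyz : y ≤ z) (hz : 2 * z ≤ x * y)
    (hΔ : 0 < x * y * z + 2 - x ^ 2 - y ^ 2 - z ^ 2) :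
    x = 3 ∧ y = 3 ∧ z = 3 ∨ 3 < x * y * z + 2 - x ^ 2 - y ^ 2 - z ^ 2 := by
  have hconc := mul_sub_sq_le_mul_sub_sq hyz hz
  rcases (show x = 2 ∨ x = 3 ∨ 4 ≤ x by omega) with rfl | rfl | hx
  · obtain rfl : z = y := by linarith
    linarith
  · rcases (show y = 3 ∨ 4 ≤ y by omega) with rfl | hy
    · have : z ≤ 4 := by linarith
      interval_cases z <;> norm_num
    · right
      nlinarith
  · right
    have hxy2 : x ^ 2 ≤ y ^ 2 := pow_le_pow_left₀ (by linarith) hxy 2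
    nlinarith [mul_le_mul_of_nonneg_left hxy2 (by linarith : (0 : ℤ) ≤ x - 2)]

theorem gap_four {w x y z : ℤ} (hw : 2 ≤ w) (hwx : w ≤ x) (hxy : x ≤ y) (hyz : y ≤ z)
    (hz : 2 * z ≤ w * x * y) :
    w = 2 ∧ x = 2 ∧ y = 2 ∧ z = 2 ∨ 3 < w * x * y * z + 3 - w ^ 2 - x ^ 2 - y ^ 2 - z ^ 2 := by
  have hconc := mul_sub_sq_le_mul_sub_sq hyz hz
  by_cases hwx2 : w = 2 ∧ x = 2
  · obtain ⟨rfl, rfl⟩ := hwx2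
    rcases (show y = 2 ∨ 3 ≤ y by omega) with rfl | hy
    · have : z ≤ 4 := by linarith
      interval_cases z <;> norm_num
    · right
      nlinarith
  · right
    have hwx6 : 6 ≤ w * x := by
      rcases (show 3 ≤ w ∨ 3 ≤ x by omega) with h | h <;> nlinarith
    have hw2 : w ^ 2 ≤ y ^ 2 := pow_le_pow_left₀ (by linarith) (hwx.trans hxy) 2
    have hx2 : x ^ 2 ≤ y ^ 2 := pow_le_pow_left₀ (by linarith) hxy 2
    nlinarith [mul_le_mul_of_nonneg_right hwx6 (sq_nonneg y)]

theorem Delta_gap_three (d : Fin 3 → ℕ) (hd : 2 ≤ d 0) (hmono : Monotone d)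
    (hbound : 2 * d (Fin.last 2) ≤ ∏ i : Fin 2, d i.castSucc) (hΔ : 0 < Dfun d) :
    (∀ i, d i = 3) ∧ Dfun d = 2 ∨ 3 < Dfun d := by
  have hb : 2 * d 2 ≤ d 0 * d 1 := by simpa [Fin.prod_univ_two] using hbound
  rw [Dfun_fin_three] at hΔ ⊢
  rcases gap_three (by exact_mod_cast hd)
      (by exact_mod_cast hmono (show (0 : Fin 3) ≤ 1 by decide))
      (by exact_mod_cast hmono (show (1 : Fin 3) ≤ 2 by decide)) (by exact_mod_cast hb) hΔ
    with ⟨h0, h1, h2⟩ | h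
  · refine Or.inl ⟨fun i => ?_, by rw [h0, h1, h2]; norm_num⟩
    fin_cases i <;> simp only [Fin.zero_eta, Fin.mk_one, Fin.reduceFinMk] <;> omega
  · exact Or.inr h

theorem Delta_gap_four (d : Fin 4 → ℕ) (hd : 2 ≤ d 0) (hmono : Monotone d)
    (hbound : 2 * d (Fin.last 3) ≤ ∏ i : Fin 3, d i.castSucc) :
    (∀ i, d i = 2) ∧ Dfun d = 3 ∨ 3 < Dfun d := by
  have hb : 2 * d 3 ≤ d 0 * d 1 * d 2 := by simpa [Fin.prod_univ_three] using hbound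
  rw [Dfun_fin_four]
  rcases gap_four (w := d 0) (x := d 1) (y := d 2) (z := d 3) (by exact_mod_cast hd)
      (by exact_mod_cast hmono (show (0 : Fin 4) ≤ 1 by decide))
      (by exact_mod_cast hmono (show (1 : Fin 4) ≤ 2 by decide))
      (by exact_mod_cast hmono (show (2 : Fin 4) ≤ 3 by decide)) (by exact_mod_cast hb)
    with ⟨h0, h1, h2, h3⟩ | h
  · refine Or.inl ⟨fun i => ?_, by rw [h0, h1, h2, h3]; norm_num⟩
    fin_cases i <;> simp only [Fin.zero_eta, Fin.mk_one, Fin.reduceFinMk] <;> omega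
  · exact Or.inr h

/-- for sorted dimensions ≥ 2 with 2·d_n ≤ ∏_{i<n} d_i and
Δ > 0, either the dimensions are (3,3,3) with Δ = 2, or (2,2,2,2) with Δ = 3,
or Δ > 3 (and exactly one of these holds, since the Δ-values are distinct). -/
theorem Delta_gap (m : ℕ) (hm : 2 ≤ m) (d : Fin (m + 1) → ℕ)
    (hd : ∀ i, 2 ≤ d i) (hmono : Monotone d)
    (hbound : 2 * d (Fin.last m) ≤ ∏ i : Fin m, d (Fin.castSucc i))
    (hΔ : 0 < Dfun d) :
    (m + 1 = 3 ∧ (∀ i, d i = 3) ∧ Dfun d = 2) ∨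
    (m + 1 = 4 ∧ (∀ i, d i = 2) ∧ Dfun d = 3) ∨
    3 < Dfun d := by
  obtain ⟨k, rfl⟩ : ∃ k, m = k + 2 := ⟨m - 2, by omega⟩
  rcases k with _ | _ | k
  · rcases Delta_gap_three d (hd 0) hmono hbound hΔ with h | h
    · exact Or.inl ⟨rfl, h⟩
    · exact Or.inr (Or.inr h)
  · rcases Delta_gap_four d (hd 0) hmono hbound with h | h
    · exact Or.inr (Or.inl ⟨rfl, h⟩)
    · exact Or.inr (Or.inr h)
  · exact Or.inr (Or.inr (three_lt_Dfun (by omega) d hd hmono hbound))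
end
end

section
/- (Sudoku states.) Let A, B, C, k be positive integers with B ∣ k·A and C ∣ k·A, and let M : Fin A → Fin B → Fin C → ℕ satisfy: (i) every entry M i b c is 0 or 1; (ii) for each i, ∑_{b,c} M i b c = k; (iii) for each i and each row b, ∑_c M i b c ≤ 1, and for each i and each column c, ∑_b M i b c ≤ 1; (iv) for each cell (b,c), ∑_i M i b c ≤ 1; (v) for each row b, ∑_{i,c} M i b c = k·A/B, and for each column c, ∑_{i,b} M i b c = k·A/C. Then the state ψ : Fin A × Fin B × Fin C → ℂ defined by ψ(i,b,c) = (M i b c) / √(k·A) is a normalized locally maximally entangled state for dimensions (A, B, C). -/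
open scoped ComplexConjugate

noncomputable section

lemma sudoku_pair_le {n : ℕ} (f : Fin n → ℕ) (x y : Fin n) (hxy : x ≠ y) :
    f x + f y ≤ ∑ i, f i := by
  calc f x + f y = ∑ i ∈ ({x, y} : Finset (Fin n)), f i := (Finset.sum_pair hxy).symm
    _ ≤ ∑ i, f i := Finset.sum_le_sum_of_subset (Finset.subset_univ _)

lemma sudoku_zprod (m m' : ℕ) (h1 : m = 0 ∨ m = 1) (h2 : m' = 0 ∨ m' = 1)
    (h3 : m + m' ≤ 1) : m * m' = 0 := by
  rcases h1 with rfl | rfl <;> rcases h2 with rfl | rfl <;> simp_all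

/-- Sudoku states are normalized LME states. -/
theorem sudoku_state_is_lme (A B C k : ℕ)
    (hA : 1 ≤ A) (hB : 1 ≤ B) (hC : 1 ≤ C) (hk : 1 ≤ k)
    (hBdvd : B ∣ k * A) (hCdvd : C ∣ k * A)
    (M : Fin A → Fin B → Fin C → ℕ)
    (hentries : ∀ i b c, M i b c = 0 ∨ M i b c = 1)
    (hcount : ∀ i, ∑ b, ∑ c, M i b c = k)
    (hrowOnce : ∀ i b, ∑ c, M i b c ≤ 1)
    (hcolOnce : ∀ i c, ∑ b, M i b c ≤ 1)
    (hcell : ∀ b c, ∑ i, M i b c ≤ 1)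
    (hrow : ∀ b, ∑ i, ∑ c, M i b c = k * A / B)
    (hcol : ∀ c, ∑ i, ∑ b, M i b c = k * A / C) :
    TriIsLME (fun x : Fin A × Fin B × Fin C =>
      (((M x.1 x.2.1 x.2.2 : ℝ) / Real.sqrt ((k * A : ℕ) : ℝ) : ℝ) : ℂ)) := by
  have hN0 : 0 < k * A := Nat.mul_pos hk hA
  have hNR : (0:ℝ) < ((k*A : ℕ):ℝ) := by exact_mod_cast hN0
  have hNC : ((k*A : ℕ):ℂ) ≠ 0 := by exact_mod_cast hN0.ne'
  have hkC : (k:ℂ) ≠ 0 := Nat.cast_ne_zero.mpr (by omega)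
  have hAC : (A:ℂ) ≠ 0 := Nat.cast_ne_zero.mpr (by omega)
  have hBC : (B:ℂ) ≠ 0 := Nat.cast_ne_zero.mpr (by omega)
  have hCC : (C:ℂ) ≠ 0 := Nat.cast_ne_zero.mpr (by omega)
  have hB0 : B ≠ 0 := by omega
  have hC0 : C ≠ 0 := by omega
  have hsq : Real.sqrt ((k*A:ℕ):ℝ) * Real.sqrt ((k*A:ℕ):ℝ) = ((k*A:ℕ):ℝ) :=
    Real.mul_self_sqrt hNR.le
  have hmm : ∀ i b c, M i b c * M i b c = M i b c := fun i b c => by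
    rcases hentries i b c with h | h <;> rw [h]
  have hprod : ∀ m m' : ℕ,
      (((m:ℝ)/Real.sqrt ((k*A:ℕ):ℝ) : ℝ):ℂ) * conj (((m':ℝ)/Real.sqrt ((k*A:ℕ):ℝ) : ℝ):ℂ)
        = ((m*m' : ℕ):ℂ)/((k*A:ℕ):ℂ) := by
    intro m m'
    rw [Complex.conj_ofReal, ← Complex.ofReal_mul, div_mul_div_comm, hsq]
    push_cast
    ring
  refine ⟨?_, ?_, ?_, ?_⟩
  · -- normalization
    have hnorm : ∀ m : ℕ, ‖((((m:ℝ)/Real.sqrt ((k*A:ℕ):ℝ)) : ℝ):ℂ)‖^2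
        = ((m*m : ℕ):ℝ)/((k*A:ℕ):ℝ) := by
      intro m
      rw [Complex.norm_real, Real.norm_eq_abs, sq_abs, div_pow, Real.sq_sqrt hNR.le]
      push_cast
      ring
    have htot : ∑ i, ∑ b, ∑ c, M i b c = k * A := by
      simp [hcount, mul_comm]
    show ∑ x : Fin A × Fin B × Fin C,
        ‖((((M x.1 x.2.1 x.2.2 :ℕ):ℝ)/Real.sqrt ((k*A:ℕ):ℝ) : ℝ):ℂ)‖^2 = 1
    rw [Fintype.sum_prod_type]
    simp_rw [Fintype.sum_prod_type, hnorm, hmm, ← Finset.sum_div]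
    rw [div_eq_one_iff_eq hNR.ne']
    exact_mod_cast htot
  · ext a a'
    simp only [rho1, Matrix.of_apply, Matrix.smul_apply, Matrix.one_apply, smul_eq_mul,
      mul_ite, mul_one, mul_zero]
    simp_rw [hprod, ← Finset.sum_div, ← Nat.cast_sum]
    by_cases h : a = a'
    · subst h
      have : ∑ b, ∑ c, M a b c * M a b c = k := by simp_rw [hmm]; exact hcount a
      rw [this, if_pos rfl]
      push_cast
      field_simp
    · have : ∑ b, ∑ c, M a b c * M a' b c = 0 :=
        Finset.sum_eq_zero fun b _ => Finset.sum_eq_zero fun c _ =>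
          sudoku_zprod _ _ (hentries a b c) (hentries a' b c)
            ((sudoku_pair_le (fun i => M i b c) a a' h).trans (hcell b c))
      rw [this, if_neg h]
      simp
  · ext b b'
    simp only [rho2, Matrix.of_apply, Matrix.smul_apply, Matrix.one_apply, smul_eq_mul,
      mul_ite, mul_one, mul_zero]
    simp_rw [hprod, ← Finset.sum_div, ← Nat.cast_sum]
    by_cases h : b = b'
    · subst h
      have : ∑ a, ∑ c, M a b c * M a b c = k * A / B := by simp_rw [hmm]; exact hrow b
      rw [this, if_pos rfl, Nat.cast_div hBdvd hBC]
      field_simp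
    · have : ∑ a, ∑ c, M a b c * M a b' c = 0 :=
        Finset.sum_eq_zero fun a _ => Finset.sum_eq_zero fun c _ =>
          sudoku_zprod _ _ (hentries a b c) (hentries a b' c)
            ((sudoku_pair_le (fun x => M a x c) b b' h).trans (hcolOnce a c))
      rw [this, if_neg h]
      simp
  · ext c c'
    simp only [rho3, Matrix.of_apply, Matrix.smul_apply, Matrix.one_apply, smul_eq_mul,
      mul_ite, mul_one, mul_zero]
    simp_rw [hprod, ← Finset.sum_div, ← Nat.cast_sum]
    by_cases h : c = c'
    · subst h
      have : ∑ a, ∑ b, M a b c * M a b c = k * A / C := by simp_rw [hmm]; exact hcol c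
      rw [this, if_pos rfl, Nat.cast_div hCdvd hCC]
      field_simp
    · have : ∑ a, ∑ b, M a b c * M a b c' = 0 :=
        Finset.sum_eq_zero fun a _ => Finset.sum_eq_zero fun b _ =>
          sudoku_zprod _ _ (hentries a b c) (hentries a b c')
            ((sudoku_pair_le (fun x => M a b x) c c' h).trans (hrowOnce a b))
      rw [this, if_neg h]
      simp
end
end
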